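/- arXiv:2204.07422 — 14 statements merged into one kernel-verified Lean document; each statement's English description precedes it below -/
import Mathlib

section
/- Let a : ℕ → ℝ be a summable sequence and let A(n) := ∑_{k=0}^n a(k) denote its partial sums. Then the following are equivalent: (i) A(n) ≥ 0 for all n ≥ 0; (ii) for every sequence b : ℕ → ℝ that is antitone (monotonically non-increasing) and tends to 0 at infinity, if the sequence n ↦ a(n)·b(n) is summable then ∑'_{n} a(n)·b(n) ≥ 0. -/
/-!
Summation by parts writes `∑_{k<n} a k * b k` as `b (n-1) * A n + ∑_{k<n-1} (b k - b (k+1)) * A (k+1)`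
with `A n = ∑_{k<n} a k`; an antitone null sequence is nonnegative, so every coefficient is
nonnegative and nonnegative partial sums give nonnegative partial sums of `a * b`. Conversely,
the indicator of `{0, …, n-1}` is an admissible `b`, and testing against it returns `A n`.
-/

open Finset Filter Topology

theorem sum_range_mul_nonneg_of_antitone {R : Type*} [CommRing R] [PartialOrder R]
    [IsOrderedRing R] {a b : ℕ → R} (ha : ∀ n, 0 ≤ ∑ k ∈ range n, a k) (hb : Antitone b)
    (hb₀ : ∀ n, 0 ≤ b n) (n : ℕ) : 0 ≤ ∑ k ∈ range n, a k * b k := by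
  have h := sum_range_by_parts b a n
  simp only [smul_eq_mul] at h
  rw [sum_congr rfl fun k _ => mul_comm (a k) (b k), h]
  refine sub_nonneg_of_le (le_trans (sum_nonpos fun i _ => ?_) (mul_nonneg (hb₀ _) (ha n)))
  exact mul_nonpos_of_nonpos_of_nonneg (sub_nonpos.2 (hb i.le_succ)) (ha _)

section IndicatorRange

variable {R : Type*}

theorem antitone_indicator_range_one [Zero R] [One R] [PartialOrder R] [ZeroLEOneClass R]
    (N : ℕ) : Antitone ((range N : Set ℕ).indicator (1 : ℕ → R)) := by
  intro i j hij
  simp only [Set.indicator_apply, mem_coe, mem_range, Pi.one_apply]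
  split_ifs <;> first | rfl | exact zero_le_one | omega

variable [TopologicalSpace R]

theorem tendsto_indicator_range_one_atTop [Zero R] [One R] (N : ℕ) :
    Tendsto ((range N : Set ℕ).indicator (1 : ℕ → R)) atTop (𝓝 0) :=
  tendsto_nhds_of_eventually_eq <| (eventually_ge_atTop N).mono fun _ hk =>
    Set.indicator_of_notMem (by simpa using hk) _

variable [NonAssocSemiring R]

theorem summable_mul_indicator_range_one (a : ℕ → R) (N : ℕ) :
    Summable fun k => a k * (range N : Set ℕ).indicator 1 k := by
  simp_rw [← Set.indicator_mul_right, Pi.one_apply, mul_one, ← summable_subtype_iff_indicator]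
  exact (range N).summable a

theorem tsum_mul_indicator_range_one (a : ℕ → R) (N : ℕ) :
    ∑' k, a k * (range N : Set ℕ).indicator 1 k = ∑ k ∈ range N, a k := by
  simp_rw [← Set.indicator_mul_right, Pi.one_apply, mul_one, ← _root_.tsum_subtype]
  exact Finset.tsum_subtype _ _

end IndicatorRange

theorem partial_sums_nonneg_iff_tsum_mul_antitone_nonneg {R : Type*} [CommRing R]
    [PartialOrder R] [IsOrderedRing R] [TopologicalSpace R] [OrderClosedTopology R]
    (a : ℕ → R) :
    (∀ n, 0 ≤ ∑ k ∈ range n, a k) ↔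
      ∀ b : ℕ → R, Antitone b → Tendsto b atTop (𝓝 0) →
        Summable (fun n => a n * b n) → 0 ≤ ∑' n, a n * b n := by
  refine ⟨fun ha b hb hb₀ hab => ?_, fun h n => ?_⟩
  · exact ge_of_tendsto' hab.hasSum.tendsto_sum_nat
      (sum_range_mul_nonneg_of_antitone ha hb (hb.le_of_tendsto hb₀))
  · rw [← tsum_mul_indicator_range_one]
    exact h _ (antitone_indicator_range_one n) (tendsto_indicator_range_one_atTop n)
      (summable_mul_indicator_range_one a n)

theorem restart_lemma_general (a : ℕ → ℝ)
    (A : ℕ → ℝ) (hA : ∀ n, A n = ∑ k ∈ Finset.range (n + 1), a k) :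
    (∀ n, 0 ≤ A n) ↔
      (∀ b : ℕ → ℝ, Antitone b → Filter.Tendsto b Filter.atTop (nhds 0) →
        Summable (fun n => a n * b n) → 0 ≤ ∑' n, a n * b n) := by
  rw [← partial_sums_nonneg_iff_tsum_mul_antitone_nonneg]
  refine ⟨fun hA₀ => ?_, fun h n => hA n ▸ h (n + 1)⟩
  rintro (_ | n)
  · simp
  · exact hA n ▸ hA₀ n

theorem restart_lemma (a : ℕ → ℝ) (ha : Summable a)
    (A : ℕ → ℝ) (hA : ∀ n, A n = ∑ k ∈ Finset.range (n + 1), a k) :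
    (∀ n, 0 ≤ A n) ↔
      (∀ b : ℕ → ℝ, Antitone b → Filter.Tendsto b Filter.atTop (nhds 0) →
        Summable (fun n => a n * b n) → 0 ≤ ∑' n, a n * b n) :=
  restart_lemma_general a A hA
end

section
/- There exists a restart distribution giving beneficial restart if and only if the restart sequence takes a negative value. Precisely: there exists R : ℕ → ℝ that is monotone non-decreasing, satisfies 0 ≤ R(n) ≤ 1 for all n, and R(n) → 1 as n → ∞, such that ∑'_{n} (1 − U(n) − u(n)·μ)·(1 − R(n)) < 0, if and only if there exists some n ≥ 0 with S(n) < 0. -/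
theorem beneficial_restart_iff_Sn_neg
    (u : ℕ → ℝ) (hu0 : ∀ n, 0 ≤ u n) (hu1 : ∑' n, u n = 1)
    (hmean : Summable (fun n : ℕ => (n : ℝ) * u n))
    (μ : ℝ) (hμ : μ = ∑' n : ℕ, (n : ℝ) * u n)
    (U S : ℕ → ℝ)
    (hU : ∀ n, U n = ∑ k ∈ Finset.range (n + 1), u k)
    (hS : ∀ n, S n = ∑ k ∈ Finset.range (n + 1), (1 - U k - u k * μ)) :
    (∃ R : ℕ → ℝ, Monotone R ∧ (∀ n, 0 ≤ R n ∧ R n ≤ 1) ∧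
        Filter.Tendsto R Filter.atTop (nhds 1) ∧
        ∑' n, (1 - U n - u n * μ) * (1 - R n) < 0) ↔
      ∃ n, S n < 0 := by
  set a : ℕ → ℝ := fun n => 1 - U n - u n * μ with ha
  constructor
  · rintro ⟨R, hmono, hbd, _, hlt⟩
    by_contra h
    push_neg at h
    set c : ℕ → ℝ := fun n => 1 - R n with hc
    have hcnonneg : ∀ n, 0 ≤ c n := fun n => by
      have := (hbd n).2; simp [hc]; linarith
    have hcanti : ∀ n, c (n + 1) ≤ c n := fun n => by
      have := hmono (Nat.le_succ n); simp only [hc]; linarith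
    have hSrec : ∀ n, a (n + 1) = S (n + 1) - S n := by
      intro n
      rw [hS, hS, Finset.sum_range_succ (n := n + 1)]
      ring
    -- key: partial sums are ≥ S N * c N
    have key : ∀ N, S N * c N ≤ ∑ k ∈ Finset.range (N + 1), a k * c k := by
      intro N
      induction N with
      | zero =>
        simp [hS]
      | succ N ih =>
        rw [Finset.sum_range_succ]
        have h1 : S N * c (N + 1) ≤ S N * c N :=
          mul_le_mul_of_nonneg_left (hcanti N) (h N)
        have h3 : S N * c (N + 1) ≤ ∑ k ∈ Finset.range (N + 1), a k * c k :=
          le_trans h1 ih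
        rw [hSrec N]
        nlinarith [h3]
    have hnn : ∀ N, 0 ≤ ∑ k ∈ Finset.range N, a k * c k := by
      intro N
      cases N with
      | zero => simp
      | succ N =>
        exact le_trans (mul_nonneg (h N) (hcnonneg N)) (key N)
    by_cases hsum : Summable (fun n => a n * c n)
    · have := hsum.hasSum.tendsto_sum_nat
      have h0 : 0 ≤ ∑' n, a n * c n := ge_of_tendsto' this hnn
      simp only [ha, hc] at h0
      linarith
    · have := tsum_eq_zero_of_not_summable hsum
      simp only [ha, hc] at this
      linarith
  · rintro ⟨n, hn⟩
    refine ⟨fun k => if n < k then 1 else 0, ?_, ?_, ?_, ?_⟩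
    · intro i j hij
      by_cases hi : n < i
      · simp [hi, lt_of_lt_of_le hi hij]
      · by_cases hj : n < j <;> simp [hi, hj]
    · intro k; by_cases hk : n < k <;> simp [hk]
    · apply Filter.Tendsto.congr' (f₁ := fun _ => (1 : ℝ))
      · filter_upwards [Filter.eventually_ge_atTop (n + 1)] with k hk
        simp [Nat.lt_of_succ_le hk]
      · exact tendsto_const_nhds
    · have heq : ∑' k, a k * (1 - if n < k then 1 else 0) =
          ∑ k ∈ Finset.range (n + 1), (a k * (1 - if n < k then 1 else 0)) := by
        apply tsum_eq_sum
        intro k hk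
        have : n < k := by
          by_contra hnk
          exact hk (Finset.mem_range.mpr (by omega))
        simp [this]
      simp only [ha] at heq ⊢
      rw [heq]
      have : ∑ k ∈ Finset.range (n + 1),
          ((1 - U k - u k * μ) * (1 - if n < k then 1 else 0)) = S n := by
        rw [hS]
        apply Finset.sum_congr rfl
        intro k hk
        have : ¬ n < k := by
          have := Finset.mem_range.mp hk; omega
        simp [this, ha]
      rw [this]
      exact hn
end

section
/- If some restart distribution is beneficial, then some sharp (deterministic) restart is beneficial. Precisely: if there exists R : ℕ → ℝ monotone non-decreasing with 0 ≤ R(n) ≤ 1 for all n and R(n) → 1 as n → ∞ such that ∑'_{n} (1 − U(n) − u(n)·μ)·(1 − R(n)) < 0, then there exists N ≥ 1 such that ∑_{n=0}^{N−1} (1 − U(n) − u(n)·μ) < 0, i.e., S(N−1) < 0, which means sharp restart at time N is beneficial. -/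
/-!
Restarting with CDF `R` weights the summand `1 - U n - u n * μ` by the survival probability
`1 - R n`, which is non-negative and non-increasing. By Abel summation such a weighted sum is a
non-negative combination of the partial sums `S (N - 1)`, so if no sharp restart is beneficial
(all these partial sums are non-negative) no restart distribution is beneficial either.
-/

open Finset

namespace Finset

variable {R : Type*} [CommRing R] [PartialOrder R] [IsOrderedRing R]

theorem sum_range_mul_nonneg_of_antitone {a w : ℕ → R} (hw : Antitone w) (hw0 : ∀ n, 0 ≤ w n)
    (ha : ∀ N, 0 ≤ ∑ n ∈ range N, a n) (N : ℕ) : 0 ≤ ∑ n ∈ range N, a n * w n := by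
  have hparts := sum_range_by_parts w a N
  simp only [smul_eq_mul] at hparts
  simp_rw [mul_comm (a _), hparts, sub_nonneg]
  have hlast : 0 ≤ w (N - 1) * ∑ n ∈ range N, a n := mul_nonneg (hw0 _) (ha N)
  have hsteps : ∑ i ∈ range (N - 1), (w (i + 1) - w i) * ∑ n ∈ range (i + 1), a n ≤ 0 :=
    sum_nonpos fun i _ ↦
      mul_nonpos_of_nonpos_of_nonneg (sub_nonpos.2 (hw i.le_succ)) (ha (i + 1))
  exact hsteps.trans hlast

end Finset

theorem tsum_mul_nonneg_of_antitone {R : Type*} [CommRing R] [PartialOrder R] [IsOrderedRing R]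
    [TopologicalSpace R] [OrderClosedTopology R] {a w : ℕ → R} (hw : Antitone w)
    (hw0 : ∀ n, 0 ≤ w n) (ha : ∀ N, 0 ≤ ∑ n ∈ range N, a n) : 0 ≤ ∑' n, a n * w n := by
  by_cases hs : Summable fun n ↦ a n * w n
  · exact ge_of_tendsto' hs.hasSum.tendsto_sum_nat (sum_range_mul_nonneg_of_antitone hw hw0 ha)
  · rw [tsum_eq_zero_of_not_summable hs]

theorem beneficial_implies_sharp_beneficial_general
    (u : ℕ → ℝ)
    (μ : ℝ)
    (U : ℕ → ℝ)
    (hR : ∃ R : ℕ → ℝ, Monotone R ∧ (∀ n, 0 ≤ R n ∧ R n ≤ 1) ∧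
        Filter.Tendsto R Filter.atTop (nhds 1) ∧
        ∑' n, (1 - U n - u n * μ) * (1 - R n) < 0) :
    ∃ N : ℕ, 1 ≤ N ∧ ∑ n ∈ Finset.range N, (1 - U n - u n * μ) < 0 := by
  obtain ⟨R, hmono, hbd, -, hneg⟩ := hR
  by_contra! hsharp
  have hS : ∀ N, 0 ≤ ∑ n ∈ range N, (1 - U n - u n * μ) := by
    rintro (_ | N)
    · simp
    · exact hsharp _ N.succ_pos
  have hsurvival : Antitone fun n ↦ 1 - R n := fun m n hmn ↦ sub_le_sub_left (hmono hmn) 1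
  exact hneg.not_ge
    (tsum_mul_nonneg_of_antitone hsurvival (fun n ↦ sub_nonneg.2 (hbd n).2) hS)

theorem beneficial_implies_sharp_beneficial
    (u : ℕ → ℝ) (hu0 : ∀ n, 0 ≤ u n) (hu1 : ∑' n, u n = 1)
    (hmean : Summable (fun n : ℕ => (n : ℝ) * u n))
    (μ : ℝ) (hμ : μ = ∑' n : ℕ, (n : ℝ) * u n)
    (U : ℕ → ℝ)
    (hU : ∀ n, U n = ∑ k ∈ Finset.range (n + 1), u k)
    (hR : ∃ R : ℕ → ℝ, Monotone R ∧ (∀ n, 0 ≤ R n ∧ R n ≤ 1) ∧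
        Filter.Tendsto R Filter.atTop (nhds 1) ∧
        ∑' n, (1 - U n - u n * μ) * (1 - R n) < 0) :
    ∃ N : ℕ, 1 ≤ N ∧ ∑ n ∈ Finset.range N, (1 - U n - u n * μ) < 0 :=
  beneficial_implies_sharp_beneficial_general u μ U hR
end

section
/- First Step Analysis: let a be the least index with u(a) > 0 (so u(k) = 0 for all k < a and u(a) > 0). If (a + 1 − u(a))/u(a) < μ, equivalently a + 1 − u(a) < u(a)·μ, then S(a) < 0 (and thus u admits beneficial restart). -/
open Finset

section VanishingBelow

variable {M : Type*} [AddCommMonoid M] {f : ℕ → M} {a : ℕ}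

theorem sum_range_eq_zero_of_forall_lt_eq_zero (hf : ∀ k, k < a → f k = 0) {n : ℕ}
    (hn : n ≤ a) : ∑ k ∈ range n, f k = 0 :=
  sum_eq_zero fun k hk => hf k ((mem_range.mp hk).trans_le hn)

theorem sum_range_succ_eq_of_forall_lt_eq_zero (hf : ∀ k, k < a → f k = 0) :
    ∑ k ∈ range (a + 1), f k = f a := by
  rw [sum_range_succ, sum_range_eq_zero_of_forall_lt_eq_zero hf le_rfl, zero_add]

end VanishingBelow

theorem first_step_analysis_general
    (u : ℕ → ℝ)
    (μ : ℝ)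
    (U S : ℕ → ℝ)
    (hU : ∀ n, U n = ∑ k ∈ Finset.range (n + 1), u k)
    (hS : ∀ n, S n = ∑ k ∈ Finset.range (n + 1), (1 - U k - u k * μ))
    (a : ℕ) (ha' : ∀ k, k < a → u k = 0)
    (hFSA : (a : ℝ) + 1 - u a < u a * μ) :
    S a < 0 := by
  have hU_below : ∀ k, k < a → U k = 0 := fun k hk =>
    (hU k).trans (sum_range_eq_zero_of_forall_lt_eq_zero ha' hk)
  have hUa : U a = u a := (hU a).trans (sum_range_succ_eq_of_forall_lt_eq_zero ha')
  have huμ_below : ∀ k, k < a → u k * μ = 0 := fun k hk => by rw [ha' k hk, zero_mul]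
  have hSa : S a = (a : ℝ) + 1 - u a - u a * μ := by
    rw [hS, sum_sub_distrib, sum_sub_distrib, sum_range_succ_eq_of_forall_lt_eq_zero hU_below,
      sum_range_succ_eq_of_forall_lt_eq_zero huμ_below, hUa, sum_const, card_range,
      nsmul_one, Nat.cast_succ]
  linarith

theorem first_step_analysis
    (u : ℕ → ℝ) (hu0 : ∀ n, 0 ≤ u n) (hu1 : ∑' n, u n = 1)
    (hmean : Summable (fun n : ℕ => (n : ℝ) * u n))
    (μ : ℝ) (hμ : μ = ∑' n : ℕ, (n : ℝ) * u n)
    (U S : ℕ → ℝ)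
    (hU : ∀ n, U n = ∑ k ∈ Finset.range (n + 1), u k)
    (hS : ∀ n, S n = ∑ k ∈ Finset.range (n + 1), (1 - U k - u k * μ))
    (a : ℕ) (ha : 0 < u a) (ha' : ∀ k, k < a → u k = 0)
    (hFSA : (a : ℝ) + 1 - u a < u a * μ) :
    S a < 0 :=
  first_step_analysis_general u μ U S hU hS a ha' hFSA
end

section
/- Suppose u has finite support with top point b ≥ 1: u(b) > 0 and u(n) = 0 for all n > b. Then S(n) = 0 for all n ≥ b, and S(b−1) = u(b)·μ > 0; in particular the last non-zero step of the restart sequence is a step down. -/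
open Finset

theorem Finset.sum_range_sum_Ico_succ {M : Type*} [AddCommMonoid M] (f : ℕ → M) (m : ℕ) :
    ∑ k ∈ range m, ∑ j ∈ Ico (k + 1) m, f j = ∑ j ∈ range m, j • f j := by
  induction m with
  | zero => simp
  | succ m ih =>
    have hsplit : ∀ k ∈ range m, ∑ j ∈ Ico (k + 1) (m + 1), f j = ∑ j ∈ Ico (k + 1) m, f j + f m :=
      fun k hk => sum_Ico_succ_top (mem_range.mp hk) f
    rw [sum_range_succ, sum_range_succ, sum_congr rfl hsplit, sum_add_distrib, ih, sum_const,
      card_range, Ico_self, sum_empty, add_zero]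

/-- Summing tails: `∑ₖ (1 - U k)` is the mean once `U` has reached total mass `1`. -/
theorem sum_range_one_sub_cumsum_sub_mul_mean_eq_zero (u : ℕ → ℝ) (n : ℕ)
    (hmass : ∑ k ∈ range (n + 1), u k = 1) :
    ∑ k ∈ range (n + 1),
      (1 - ∑ j ∈ range (k + 1), u j - u k * ∑ j ∈ range (n + 1), (j : ℝ) * u j) = 0 := by
  have htail : ∀ k ∈ range (n + 1), 1 - ∑ j ∈ range (k + 1), u j = ∑ j ∈ Ico (k + 1) (n + 1), u j := by
    intro k hk
    rw [sum_Ico_eq_sub _ (mem_range.mp hk), hmass]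
  rw [sum_sub_distrib, ← sum_mul, hmass, one_mul, sum_congr rfl htail, sum_range_sum_Ico_succ]
  simp only [nsmul_eq_mul, sub_self]

theorem finite_support_last_step_down_general
    (u : ℕ → ℝ) (hu0 : ∀ n, 0 ≤ u n) (hu1 : ∑' n, u n = 1)
    (μ : ℝ) (hμ : μ = ∑' n : ℕ, (n : ℝ) * u n)
    (U S : ℕ → ℝ)
    (hU : ∀ n, U n = ∑ k ∈ Finset.range (n + 1), u k)
    (hS : ∀ n, S n = ∑ k ∈ Finset.range (n + 1), (1 - U k - u k * μ))
    (b : ℕ) (hb : 1 ≤ b) (hub : 0 < u b) (hb' : ∀ n, b < n → u n = 0) :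
    (∀ n, b ≤ n → S n = 0) ∧ S (b - 1) = u b * μ ∧ 0 < S (b - 1) := by
  have hsupp : ∀ n, b ≤ n → ∀ k ∉ range (n + 1), u k = 0 :=
    fun n hn k hk => hb' k (by rw [mem_range] at hk; omega)
  have hU1 : ∀ n, b ≤ n → U n = 1 := fun n hn => by
    rw [hU, ← hu1, tsum_eq_sum (hsupp n hn)]
  have hμn : ∀ n, b ≤ n → μ = ∑ j ∈ range (n + 1), (j : ℝ) * u j := fun n hn => by
    rw [hμ, tsum_eq_sum fun k hk => by rw [hsupp n hn k hk, mul_zero]]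
  have hS0 : ∀ n, b ≤ n → S n = 0 := fun n hn => by
    rw [hS, hμn n hn]
    simp_rw [hU]
    exact sum_range_one_sub_cumsum_sub_mul_mean_eq_zero u n (by rw [← hU, hU1 n hn])
  obtain ⟨c, rfl⟩ : ∃ c, b = c + 1 := ⟨b - 1, by omega⟩
  have hSc : S c = u (c + 1) * μ := by
    have hstep : S (c + 1) = S c + (1 - U (c + 1) - u (c + 1) * μ) := by
      rw [hS, hS, sum_range_succ]
    rw [hS0 _ le_rfl, hU1 _ le_rfl] at hstep
    linarith
  have hμpos : 0 < μ := by
    rw [hμn _ le_rfl]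
    exact (mul_pos (by positivity) hub).trans_le (single_le_sum (f := fun j : ℕ => (j : ℝ) * u j)
      (fun j _ => mul_nonneg j.cast_nonneg (hu0 j)) (self_mem_range_succ (c + 1)))
  simp only [add_tsub_cancel_right]
  exact ⟨hS0, hSc, hSc ▸ mul_pos hub hμpos⟩

theorem finite_support_last_step_down
    (u : ℕ → ℝ) (hu0 : ∀ n, 0 ≤ u n) (hu1 : ∑' n, u n = 1)
    (hmean : Summable (fun n : ℕ => (n : ℝ) * u n))
    (μ : ℝ) (hμ : μ = ∑' n : ℕ, (n : ℝ) * u n)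
    (U S : ℕ → ℝ)
    (hU : ∀ n, U n = ∑ k ∈ Finset.range (n + 1), u k)
    (hS : ∀ n, S n = ∑ k ∈ Finset.range (n + 1), (1 - U k - u k * μ))
    (b : ℕ) (hb : 1 ≤ b) (hub : 0 < u b) (hb' : ∀ n, b < n → u n = 0) :
    (∀ n, b ≤ n → S n = 0) ∧ S (b - 1) = u b * μ ∧ 0 < S (b - 1) :=
  finite_support_last_step_down_general u hu0 hu1 μ hμ U S hU hS b hb hub hb'
end

section
/- Let u be the mixture of two point masses: u(n) = w₁ if n = N₁, u(n) = w₂ if n = N₂, and u(n) = 0 otherwise, where w₁, w₂ ∈ (0,1) with w₁ + w₂ = 1 and N₁ < N₂ are natural numbers. Then S(N₁) < 0 if and only if w₁·N₂ > (w₁ + 1)·N₁ + 1 (equivalently N₂ > ((w₁+1)·N₁ + 1)/w₁); i.e., sharp restart at N₁ + 1 is beneficial exactly when the two point masses are sufficiently far apart. -/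
/-!
Only the first atom lies in `[0, N₁]`, so `U` vanishes below `N₁` and
`S(N₁) = N₁ + 1 - w₁ - w₁ μ`. Substituting `μ = w₁ N₁ + w₂ N₂` and `w₁ + w₂ = 1`, this factors as
`S(N₁) = w₂ ((w₁ + 1) N₁ + 1 - w₁ N₂)`, and `w₂ > 0` gives the sign.
-/

open Finset

section TwoPoint

variable {R : Type*} (x y : R)

lemma hasSum_mul_ite_ite {α : Type*} [DecidableEq α] {a b : α} [NonUnitalNonAssocSemiring R]
    [TopologicalSpace R] [ContinuousAdd R] (hab : a ≠ b) (f : α → R) :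
    HasSum (fun n ↦ f n * if n = a then x else if n = b then y else 0) (f a * x + f b * y) := by
  convert (hasSum_ite_eq a (f a * x)).add (hasSum_ite_eq b (f b * y)) using 1
  funext n
  by_cases ha : n = a
  · subst ha; simp [hab]
  · by_cases hb : n = b
    · subst hb; simp [ha]
    · simp [ha, hb]

lemma sum_range_succ_ite_ite_of_lt [AddCommMonoid R] {a b k : ℕ} (hk : k < b) :
    ∑ j ∈ range (k + 1), (if j = a then x else if j = b then y else 0) = if a ≤ k then x else 0 := by
  have hb : ∀ j ∈ range (k + 1), (if j = b then y else 0) = 0 := fun j hj ↦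
    if_neg (by rw [mem_range] at hj; omega)
  rw [sum_congr rfl fun j hj ↦ by rw [hb j hj], sum_ite_eq']
  simp only [mem_range, Nat.lt_succ_iff]

end TwoPoint

theorem two_point_masses_beneficial_iff_general
    (w₁ w₂ : ℝ) (hw₂ : w₂ ∈ Set.Ioo (0 : ℝ) 1)
    (hw : w₁ + w₂ = 1)
    (N₁ N₂ : ℕ) (hN : N₁ < N₂)
    (u : ℕ → ℝ)
    (hu : ∀ n, u n = if n = N₁ then w₁ else if n = N₂ then w₂ else 0)
    (μ : ℝ) (hμ : μ = ∑' n : ℕ, (n : ℝ) * u n)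
    (U S : ℕ → ℝ)
    (hU : ∀ n, U n = ∑ k ∈ Finset.range (n + 1), u k)
    (hS : ∀ n, S n = ∑ k ∈ Finset.range (n + 1), (1 - U k - u k * μ)) :
    S N₁ < 0 ↔ (w₁ + 1) * N₁ + 1 < w₁ * N₂ := by
  obtain rfl : u = _ := funext hu
  have hμ' : μ = N₁ * w₁ + N₂ * w₂ :=
    hμ ▸ (hasSum_mul_ite_ite w₁ w₂ hN.ne (fun n : ℕ ↦ (n : ℝ))).tsum_eq
  have hU_lt : ∀ k < N₁, U k = 0 := fun k hk ↦ by
    rw [hU, sum_range_succ_ite_ite_of_lt w₁ w₂ (hk.trans hN), if_neg (by omega)]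
  have hU_N₁ : U N₁ = w₁ := by
    rw [hU, sum_range_succ_ite_ite_of_lt w₁ w₂ hN, if_pos le_rfl]
  have hS_N₁ : S N₁ = N₁ + 1 - w₁ - w₁ * μ := by
    rw [hS, sum_sub_distrib, sum_sub_distrib, ← sum_mul, ← hU, sum_range_succ U,
      sum_eq_zero fun k hk ↦ hU_lt k (mem_range.1 hk), hU_N₁]
    simp
  have hS_factor : S N₁ = w₂ * ((w₁ + 1) * N₁ + 1 - w₁ * N₂) := by
    rw [hS_N₁, hμ']
    linear_combination (-((w₁ + 1) * N₁ + 1)) * hw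
  rw [hS_factor, ← smul_eq_mul, smul_neg_iff_of_pos_left hw₂.1, sub_neg]

theorem two_point_masses_beneficial_iff
    (w₁ w₂ : ℝ) (hw₁ : w₁ ∈ Set.Ioo (0 : ℝ) 1) (hw₂ : w₂ ∈ Set.Ioo (0 : ℝ) 1)
    (hw : w₁ + w₂ = 1)
    (N₁ N₂ : ℕ) (hN : N₁ < N₂)
    (u : ℕ → ℝ)
    (hu : ∀ n, u n = if n = N₁ then w₁ else if n = N₂ then w₂ else 0)
    (μ : ℝ) (hμ : μ = ∑' n : ℕ, (n : ℝ) * u n)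
    (U S : ℕ → ℝ)
    (hU : ∀ n, U n = ∑ k ∈ Finset.range (n + 1), u k)
    (hS : ∀ n, S n = ∑ k ∈ Finset.range (n + 1), (1 - U k - u k * μ)) :
    S N₁ < 0 ↔ (w₁ + 1) * N₁ + 1 < w₁ * N₂ :=
  two_point_masses_beneficial_iff_general w₁ w₂ hw₂ hw N₁ N₂ hN u hu μ hμ U S hU hS
end

section
/- Delaying a first-passage time by g steps transforms the restart sequence as follows. Let g ∈ ℕ and define the delayed PMF ũ by ũ(n) = 0 for n < g and ũ(n) = u(n−g) for n ≥ g (whose mean is μ + g). Then its restart sequence S̃ satisfies: S̃(n) = n + 1 for all n < g, and S̃(n) = S(n−g) + g·(1 − U(n−g)) for all n ≥ g. Consequently, if S(n) ≥ 0 for all n then S̃(n) ≥ 0 for all n: if u does not permit beneficial restart, neither does its delay. -/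
/-!
Delaying by `g` makes the cumulative mass function vanish below `g` and shifts it by `g` above,
while the mean grows by `g`. Below `g` every summand of the restart sequence is therefore `1`;
from `g` on, the first `g` summands contribute `g` and the extra `u k * g` in the remaining
ones adds up to `g * U m`. Since `U ≤ 1`, the correction `g * (1 - U m)` is nonnegative.
-/

open Finset

section Delay

variable {M : Type*}

def delay [Zero M] (u : ℕ → M) (g n : ℕ) : M := if n < g then 0 else u (n - g)

@[simp]
theorem delay_of_lt [Zero M] (u : ℕ → M) {g n : ℕ} (h : n < g) : delay u g n = 0 := if_pos h

@[simp]
theorem delay_add [Zero M] (u : ℕ → M) (g m : ℕ) : delay u g (g + m) = u m := by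
  simp [delay]

def cumulative [AddCommMonoid M] (u : ℕ → M) (n : ℕ) : M := ∑ k ∈ range (n + 1), u k

variable [AddCommMonoid M]

theorem cumulative_delay_of_lt (u : ℕ → M) {g n : ℕ} (h : n < g) :
    cumulative (delay u g) n = 0 :=
  sum_eq_zero fun _ hk => delay_of_lt u ((mem_range.mp hk).trans_le h)

theorem cumulative_delay_add (u : ℕ → M) (g m : ℕ) :
    cumulative (delay u g) (g + m) = cumulative u m := by
  rw [cumulative, add_assoc, sum_range_add, sum_eq_zero fun k hk => delay_of_lt u (mem_range.mp hk)]
  simp [cumulative]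

end Delay

def restartSeq (u : ℕ → ℝ) (μ : ℝ) (n : ℕ) : ℝ :=
  ∑ k ∈ range (n + 1), (1 - cumulative u k - u k * μ)

theorem restartSeq_delay_of_lt (u : ℕ → ℝ) (ν : ℝ) {g n : ℕ} (h : n < g) :
    restartSeq (delay u g) ν n = n + 1 := by
  have hk : ∀ k ∈ range (n + 1), 1 - cumulative (delay u g) k - delay u g k * ν = 1 := by
    intro k hk
    have hkg : k < g := (mem_range.mp hk).trans_le h
    simp [cumulative_delay_of_lt u hkg, hkg]
  simp [restartSeq, sum_congr rfl hk]

theorem restartSeq_delay_add (u : ℕ → ℝ) (μ : ℝ) (g m : ℕ) :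
    restartSeq (delay u g) (μ + g) (g + m) = restartSeq u μ m + g * (1 - cumulative u m) := by
  have below : ∀ k ∈ range g, 1 - cumulative (delay u g) k - delay u g k * (μ + g) = 1 := by
    intro k hk
    have hkg : k < g := mem_range.mp hk
    simp [cumulative_delay_of_lt u hkg, hkg]
  rw [restartSeq, add_assoc, sum_range_add, sum_congr rfl below]
  simp only [cumulative_delay_add, delay_add, sum_const, card_range, nsmul_eq_mul, mul_one]
  rw [restartSeq, cumulative, mul_sub, mul_sum, mul_one]
  simp only [mul_add, ← sub_sub, sum_sub_distrib, mul_comm _ (g : ℝ)]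
  ring

theorem cumulative_le_one {u : ℕ → ℝ} (hu0 : ∀ n, 0 ≤ u n) (hu1 : ∑' n, u n = 1) (n : ℕ) :
    cumulative u n ≤ 1 := by
  have hsum : Summable u := by
    by_contra h
    simp [tsum_eq_zero_of_not_summable h] at hu1
  exact hu1 ▸ hsum.sum_le_tsum _ fun k _ => hu0 k

theorem delayed_restart_sequence_general
    (u : ℕ → ℝ) (hu0 : ∀ n, 0 ≤ u n) (hu1 : ∑' n, u n = 1)
    (μ : ℝ)
    (U S : ℕ → ℝ)
    (hU : ∀ n, U n = ∑ k ∈ Finset.range (n + 1), u k)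
    (hS : ∀ n, S n = ∑ k ∈ Finset.range (n + 1), (1 - U k - u k * μ))
    (g : ℕ)
    (v : ℕ → ℝ) (hv : ∀ n, v n = if n < g then 0 else u (n - g))
    (V T : ℕ → ℝ)
    (hV : ∀ n, V n = ∑ k ∈ Finset.range (n + 1), v k)
    (hT : ∀ n, T n = ∑ k ∈ Finset.range (n + 1), (1 - V k - v k * (μ + g))) :
    (∀ n, n < g → T n = (n : ℝ) + 1) ∧
    (∀ n, g ≤ n → T n = S (n - g) + (g : ℝ) * (1 - U (n - g))) ∧
    ((∀ n, 0 ≤ S n) → ∀ n, 0 ≤ T n) := by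
  obtain rfl : U = cumulative u := funext hU
  obtain rfl : S = restartSeq u μ := funext hS
  obtain rfl : v = delay u g := funext hv
  obtain rfl : V = cumulative (delay u g) := funext hV
  obtain rfl : T = restartSeq (delay u g) (μ + g) := funext hT
  have above : ∀ n, g ≤ n →
      restartSeq (delay u g) (μ + g) n = restartSeq u μ (n - g) + g * (1 - cumulative u (n - g)) := by
    intro n hn
    obtain ⟨m, rfl⟩ := Nat.exists_eq_add_of_le hn
    simpa using restartSeq_delay_add u μ g m
  refine ⟨fun n => restartSeq_delay_of_lt u _, above, fun hS n => ?_⟩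
  rcases lt_or_ge n g with hn | hn
  · rw [restartSeq_delay_of_lt u _ hn]
    positivity
  · rw [above n hn]
    exact add_nonneg (hS _) (mul_nonneg g.cast_nonneg (sub_nonneg.mpr (cumulative_le_one hu0 hu1 _)))

theorem delayed_restart_sequence
    (u : ℕ → ℝ) (hu0 : ∀ n, 0 ≤ u n) (hu1 : ∑' n, u n = 1)
    (hmean : Summable (fun n : ℕ => (n : ℝ) * u n))
    (μ : ℝ) (hμ : μ = ∑' n : ℕ, (n : ℝ) * u n)
    (U S : ℕ → ℝ)
    (hU : ∀ n, U n = ∑ k ∈ Finset.range (n + 1), u k)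
    (hS : ∀ n, S n = ∑ k ∈ Finset.range (n + 1), (1 - U k - u k * μ))
    (g : ℕ)
    (v : ℕ → ℝ) (hv : ∀ n, v n = if n < g then 0 else u (n - g))
    (V T : ℕ → ℝ)
    (hV : ∀ n, V n = ∑ k ∈ Finset.range (n + 1), v k)
    (hT : ∀ n, T n = ∑ k ∈ Finset.range (n + 1), (1 - V k - v k * (μ + g))) :
    (∀ n, n < g → T n = (n : ℝ) + 1) ∧
    (∀ n, g ≤ n → T n = S (n - g) + (g : ℝ) * (1 - U (n - g))) ∧
    ((∀ n, 0 ≤ S n) → ∀ n, 0 ≤ T n) :=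
  delayed_restart_sequence_general u hu0 hu1 μ U S hU hS g v hv V T hV hT
end

section
/- Let u be supported exactly on the interval {a, …, b} with a ≤ b (u(n) > 0 for a ≤ n ≤ b, u(n) = 0 otherwise), and suppose the restart sequence is convex or linear on the support: u(n+1) ≤ K·u(n) for all n with a ≤ n < b, where K := μ/(μ+1). Then S(n) ≥ 0 for all n ≥ 0, so u does not permit beneficial restart. -/
theorem convex_on_finite_support_no_beneficial_restart
    (u : ℕ → ℝ) (hu0 : ∀ n, 0 ≤ u n) (hu1 : ∑' n, u n = 1)
    (hmean : Summable (fun n : ℕ => (n : ℝ) * u n))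
    (μ : ℝ) (hμ : μ = ∑' n : ℕ, (n : ℝ) * u n)
    (U S : ℕ → ℝ)
    (hU : ∀ n, U n = ∑ k ∈ Finset.range (n + 1), u k)
    (hS : ∀ n, S n = ∑ k ∈ Finset.range (n + 1), (1 - U k - u k * μ))
    (K : ℝ) (hK : K = μ / (μ + 1))
    (a b : ℕ) (hab : a ≤ b)
    (hpos : ∀ n, a ≤ n → n ≤ b → 0 < u n)
    (hzero : ∀ n, n < a ∨ b < n → u n = 0)
    (hconv : ∀ n, a ≤ n → n < b → u (n + 1) ≤ K * u n) :
    ∀ n, 0 ≤ S n := by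
  set s : ℕ → ℝ := fun k => 1 - U k - u k * μ with hs
  -- μ ≥ 0
  have hμ0 : 0 ≤ μ := by
    rw [hμ]
    exact tsum_nonneg fun n => mul_nonneg (Nat.cast_nonneg n) (hu0 n)
  -- U k = 1 for k ≥ b
  have hU1 : ∀ k, b ≤ k → U k = 1 := by
    intro k hk
    rw [hU, ← hu1]
    symm
    apply tsum_eq_sum
    intro n hn
    simp only [Finset.mem_range, not_lt] at hn
    exact hzero n (Or.inr (lt_of_le_of_lt hk hn))
  -- U k = 0 for k < a
  have hU0 : ∀ k, k < a → U k = 0 := by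
    intro k hk
    rw [hU]
    apply Finset.sum_eq_zero
    intro j hj
    simp only [Finset.mem_range] at hj
    exact hzero j (Or.inl (lt_of_lt_of_le hj hk))
  -- μ as finite sum
  have hμsum : μ = ∑ j ∈ Finset.range (b + 1), (j : ℝ) * u j := by
    rw [hμ]
    apply tsum_eq_sum
    intro n hn
    simp only [Finset.mem_range, not_lt] at hn
    rw [hzero n (Or.inr hn), mul_zero]
  -- counting identity
  have hC : ∀ N, ∑ k ∈ Finset.range N, U k
      = ∑ j ∈ Finset.range N, ((N : ℝ) - (j : ℝ)) * u j := by
    intro N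
    induction N with
    | zero => simp
    | succ N ih =>
      have key : ∑ j ∈ Finset.range N, (((N : ℝ) + 1) - (j : ℝ)) * u j
          = ∑ j ∈ Finset.range N, ((N : ℝ) - (j : ℝ)) * u j
            + ∑ j ∈ Finset.range N, u j := by
        rw [← Finset.sum_add_distrib]
        exact Finset.sum_congr rfl fun j _ => by ring
      rw [Finset.sum_range_succ, ih, hU]
      push_cast
      rw [Finset.sum_range_succ (f := fun j => ((N : ℝ) + 1 - (j : ℝ)) * u j), key,
        Finset.sum_range_succ (f := u)]
      ring
  -- S b = 0
  have hSb : S b = 0 := by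
    have hub : ∑ k ∈ Finset.range (b + 1), u k = 1 := by rw [← hU b]; exact hU1 b le_rfl
    rw [hS]
    have expand : ∑ k ∈ Finset.range (b + 1), (1 - U k - u k * μ)
        = (b + 1 : ℝ) - (∑ k ∈ Finset.range (b + 1), U k)
          - (∑ k ∈ Finset.range (b + 1), u k) * μ := by
      rw [Finset.sum_sub_distrib, Finset.sum_sub_distrib, Finset.sum_const,
        Finset.card_range, ← Finset.sum_mul]
      push_cast
      ring
    have split : ∑ j ∈ Finset.range (b + 1), (((b : ℝ) + 1) - (j : ℝ)) * u j
        = ((b : ℝ) + 1) * (∑ j ∈ Finset.range (b + 1), u j)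
          - ∑ j ∈ Finset.range (b + 1), (j : ℝ) * u j := by
      rw [Finset.mul_sum, ← Finset.sum_sub_distrib]
      exact Finset.sum_congr rfl fun j _ => by ring
    rw [expand, hC (b + 1), hub]
    push_cast at split ⊢
    rw [split, hub, ← hμsum]
    ring
  -- s k ≤ 0 for a ≤ k ≤ b
  have hsb : s b ≤ 0 := by
    simp only [hs]
    rw [hU1 b le_rfl]
    nlinarith [mul_nonneg (hu0 b) hμ0]
  have hmono : ∀ k, a ≤ k → k < b → s k ≤ s (k + 1) := by
    intro k hak hkb
    have h1 : (μ + 1) * u (k + 1) ≤ μ * u k := by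
      have hc := hconv k hak hkb
      rw [hK] at hc
      have hμ1 : (0 : ℝ) < μ + 1 := by linarith
      rw [div_mul_eq_mul_div, le_div_iff₀ hμ1] at hc
      linarith [hc]
    have hUk : U (k + 1) = U k + u (k + 1) := by
      rw [hU, hU, Finset.sum_range_succ]
    simp only [hs]
    rw [hUk]
    nlinarith [h1]
  have hsneg : ∀ d k, a ≤ k → k + d = b → s k ≤ 0 := by
    intro d
    induction d with
    | zero => intro k hak hkb; rw [Nat.add_zero] at hkb; subst hkb; exact hsb
    | succ d ih =>
      intro k hak hkb
      have hkb' : k < b := by omega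
      have := ih (k + 1) (by omega) (by omega)
      exact le_trans (hmono k hak hkb') this
  have hsneg' : ∀ k, a ≤ k → k ≤ b → s k ≤ 0 := by
    intro k hak hkb
    exact hsneg (b - k) k hak (by omega)
  -- s k = 0 for k > b
  have hszero : ∀ k, b < k → s k = 0 := by
    intro k hk
    simp only [hs]
    rw [hU1 k hk.le, hzero k (Or.inr hk)]
    ring
  -- s k = 1 for k < a
  have hs1 : ∀ k, k < a → s k = 1 := by
    intro k hk
    simp only [hs]
    rw [hU0 k hk, hzero k (Or.inl hk)]
    ring
  -- main
  intro n
  rcases lt_or_ge n a with hna | hna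
  · rw [hS]
    apply Finset.sum_nonneg
    intro k hk
    simp only [Finset.mem_range] at hk
    have : s k = 1 := hs1 k (by omega)
    simp only [hs] at this
    rw [this]; norm_num
  · rcases le_or_gt n b with hnb | hnb
    · -- a ≤ n ≤ b : S b = S n + ∑_{Ico (n+1) (b+1)} s with nonpositive tail
      have hsplit : S n + ∑ k ∈ Finset.Ico (n + 1) (b + 1), s k = S b := by
        rw [hS, hS, Finset.range_eq_Ico, Finset.range_eq_Ico]
        exact Finset.sum_Ico_consecutive _ (n := n + 1) (by omega) (by omega)
      have htail : ∑ k ∈ Finset.Ico (n + 1) (b + 1), s k ≤ 0 := by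
        apply Finset.sum_nonpos
        intro k hk
        simp only [Finset.mem_Ico] at hk
        exact hsneg' k (by omega) (by omega)
      linarith [hsplit, htail, hSb.ge]
    · -- n > b : S n = S b + 0
      have hsplit : S b + ∑ k ∈ Finset.Ico (b + 1) (n + 1), s k = S n := by
        rw [hS, hS, Finset.range_eq_Ico, Finset.range_eq_Ico]
        exact Finset.sum_Ico_consecutive _ (n := b + 1) (by omega) (by omega)
      have htail : ∑ k ∈ Finset.Ico (b + 1) (n + 1), s k = 0 := by
        apply Finset.sum_eq_zero
        intro k hk
        simp only [Finset.mem_Ico] at hk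
        exact hszero k (by omega)
      rw [← hsplit, htail, hSb]
      norm_num
end

section
/- Let u be supported exactly on the interval {a, …, b} with a ≤ b (u(n) > 0 for a ≤ n ≤ b, u(n) = 0 otherwise), and suppose the restart sequence is concave on the support: u(n+1) > K·u(n) for all n with a ≤ n < b, where K := μ/(μ+1). Then there exists n with S(n) < 0 if and only if S(a) < 0; i.e., checking the First Step Analysis inequality at a suffices to decide whether beneficial restart exists. -/
lemma sum_cumsum_aux (u : ℕ → ℝ) :
    ∀ m, ∑ k ∈ Finset.range m, (∑ j ∈ Finset.range (k+1), u j)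
      = ∑ j ∈ Finset.range m, ((m : ℝ) - j) * u j := by
  intro m
  induction m with
  | zero => simp
  | succ m ih =>
      rw [Finset.sum_range_succ, ih, Finset.sum_range_succ u m,
          Finset.sum_range_succ (fun j => ((↑(m+1) : ℝ) - ↑j) * u j) m]
      have h : ∑ j ∈ Finset.range m, ((m:ℝ) - j) * u j + ∑ j ∈ Finset.range m, u j
          = ∑ j ∈ Finset.range m, ((↑(m+1) : ℝ) - ↑j) * u j := by
        rw [← Finset.sum_add_distrib]
        refine Finset.sum_congr rfl fun j _ => ?_
        push_cast; ring
      push_cast at h ⊢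
      linarith

theorem concave_on_finite_support_FSA_decides
    (u : ℕ → ℝ) (hu0 : ∀ n, 0 ≤ u n) (hu1 : ∑' n, u n = 1)
    (hmean : Summable (fun n : ℕ => (n : ℝ) * u n))
    (μ : ℝ) (hμ : μ = ∑' n : ℕ, (n : ℝ) * u n)
    (U S : ℕ → ℝ)
    (hU : ∀ n, U n = ∑ k ∈ Finset.range (n + 1), u k)
    (hS : ∀ n, S n = ∑ k ∈ Finset.range (n + 1), (1 - U k - u k * μ))
    (K : ℝ) (hK : K = μ / (μ + 1))
    (a b : ℕ) (hab : a ≤ b)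
    (hpos : ∀ n, a ≤ n → n ≤ b → 0 < u n)
    (hzero : ∀ n, n < a ∨ b < n → u n = 0)
    (hconc : ∀ n, a ≤ n → n < b → K * u n < u (n + 1)) :
    (∃ n, S n < 0) ↔ S a < 0 := by
  have hμ0 : 0 ≤ μ := by
    rw [hμ]
    exact tsum_nonneg fun n => mul_nonneg (Nat.cast_nonneg n) (hu0 n)
  -- total mass on the support
  have hsum1 : ∑ k ∈ Finset.range (b+1), u k = 1 := by
    rw [← hu1]
    exact (tsum_eq_sum (fun k hk => hzero k (Or.inr (by
      simp only [Finset.mem_range] at hk; omega)))).symm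
  have hμsum : μ = ∑ k ∈ Finset.range (b+1), (k : ℝ) * u k := by
    rw [hμ]
    exact tsum_eq_sum (fun k hk => by
      rw [hzero k (Or.inr (by simp only [Finset.mem_range] at hk; omega)), mul_zero])
  have hU1 : ∀ k, b ≤ k → U k = 1 := by
    intro k hk
    rw [hU k, ← hsum1]
    exact (Finset.sum_subset (Finset.range_subset_range.mpr (by omega))
      (fun x _ hx => hzero x (Or.inr (by simp only [Finset.mem_range] at hx; omega)))).symm
  -- increments
  have dzero : ∀ j, b < j → (1 - U j - u j * μ) = 0 := by
    intro j hj
    rw [hU1 j (le_of_lt hj), hzero j (Or.inr hj)]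
    ring
  have dlow : ∀ k, k < a → (1 - U k - u k * μ) = 1 := by
    intro k hk
    have hUk : U k = 0 := by
      rw [hU k]
      exact Finset.sum_eq_zero fun j hj => hzero j (Or.inl (by
        simp only [Finset.mem_range] at hj; omega))
    rw [hUk, hzero k (Or.inl hk)]
    ring
  -- S b = 0
  have hSb : S b = 0 := by
    rw [hS b]
    have e1 : ∑ k ∈ Finset.range (b+1), (1 - U k - u k * μ)
        = (∑ k ∈ Finset.range (b+1), (1:ℝ)) - (∑ k ∈ Finset.range (b+1), U k)
          - (∑ k ∈ Finset.range (b+1), u k * μ) := by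
      rw [← Finset.sum_sub_distrib, ← Finset.sum_sub_distrib]
    have e2 : ∑ k ∈ Finset.range (b+1), (1:ℝ) = (b+1 : ℝ) := by
      simp
    have e3 : ∑ k ∈ Finset.range (b+1), U k = (b+1 : ℝ) - μ := by
      have : ∑ k ∈ Finset.range (b+1), U k
          = ∑ k ∈ Finset.range (b+1), (∑ j ∈ Finset.range (k+1), u j) :=
        Finset.sum_congr rfl fun k _ => hU k
      rw [this, sum_cumsum_aux]
      have e4 : ∑ j ∈ Finset.range (b+1), ((↑(b+1) : ℝ) - j) * u j
          = (↑(b+1) : ℝ) * (∑ j ∈ Finset.range (b+1), u j)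
            - ∑ j ∈ Finset.range (b+1), (j : ℝ) * u j := by
        rw [Finset.mul_sum, ← Finset.sum_sub_distrib]
        exact Finset.sum_congr rfl fun j _ => by ring
      rw [e4, hsum1, ← hμsum]
      push_cast
      ring
    have e5 : ∑ k ∈ Finset.range (b+1), u k * μ = μ := by
      rw [← Finset.sum_mul, hsum1, one_mul]
    rw [e1, e2, e3, e5]
    ring
  -- increments strictly decrease on the support
  have hdec : ∀ j, a ≤ j → j < b →
      (1 - U (j+1) - u (j+1) * μ) < (1 - U j - u j * μ) := by
    intro j hja hjb
    have h1 : (0:ℝ) < μ + 1 := by linarith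
    have h2 := hconc j hja hjb
    rw [hK, div_mul_eq_mul_div] at h2
    have h3 : μ * u j < u (j+1) * (μ+1) := (div_lt_iff₀ h1).mp h2
    have h4 : U (j+1) = U j + u (j+1) := by
      rw [hU (j+1), hU j, Finset.sum_range_succ]
    rw [h4]
    nlinarith
  -- antitone increments on [a, b]
  have hmono : ∀ k j, a ≤ k → k ≤ j → j ≤ b →
      (1 - U j - u j * μ) ≤ (1 - U k - u k * μ) := by
    intro k j hak hkj hjb
    induction j, hkj using Nat.le_induction with
    | base => exact le_refl _
    | succ j hkj ih =>
        have hjb' : j < b := by omega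
        exact le_trans (le_of_lt (hdec j (le_trans hak hkj) hjb')) (ih (by omega))
  constructor
  · rintro ⟨n, hn⟩
    by_contra hSa
    push_neg at hSa
    -- n < a impossible
    rcases lt_or_ge n a with hna | hna
    · have : S n = (n+1 : ℝ) := by
        rw [hS n]
        rw [Finset.sum_congr rfl (fun k hk => dlow k (by
          simp only [Finset.mem_range] at hk; omega))]
        simp
      rw [this] at hn
      have : (0:ℝ) ≤ (n:ℝ) := Nat.cast_nonneg n
      linarith
    rcases le_or_gt n b with hnb | hnb
    · -- a ≤ n ≤ b
      have hsplit1 : S n = S a + ∑ k ∈ Finset.Ico (a+1) (n+1), (1 - U k - u k * μ) := by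
        rw [hS n, hS a, Finset.range_eq_Ico, Finset.range_eq_Ico]
        exact (Finset.sum_Ico_consecutive _ (Nat.zero_le _) (by omega)).symm
      have hsplit2 : S b = S n + ∑ k ∈ Finset.Ico (n+1) (b+1), (1 - U k - u k * μ) := by
        rw [hS b, hS n, Finset.range_eq_Ico, Finset.range_eq_Ico]
        exact (Finset.sum_Ico_consecutive _ (Nat.zero_le _) (by omega)).symm
      -- some increment in (a, n] is negative
      have hex : ∃ k ∈ Finset.Ico (a+1) (n+1), (1 - U k - u k * μ) < 0 := by
        by_contra hall
        push_neg at hall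
        have : (0:ℝ) ≤ ∑ k ∈ Finset.Ico (a+1) (n+1), (1 - U k - u k * μ) :=
          Finset.sum_nonneg hall
        linarith [hsplit1]
      obtain ⟨k, hkmem, hkneg⟩ := hex
      simp only [Finset.mem_Ico] at hkmem
      have htail : ∑ k' ∈ Finset.Ico (n+1) (b+1), (1 - U k' - u k' * μ) ≤ 0 := by
        apply Finset.sum_nonpos
        intro j hj
        simp only [Finset.mem_Ico] at hj
        have : (1 - U j - u j * μ) ≤ (1 - U k - u k * μ) :=
          hmono k j (by omega) (by omega) (by omega)
        linarith
      have : S b < 0 := by linarith [hsplit2]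
      linarith [hSb]
    · -- n > b : S n = S b = 0
      have hsplit : S n = S b + ∑ k ∈ Finset.Ico (b+1) (n+1), (1 - U k - u k * μ) := by
        rw [hS n, hS b, Finset.range_eq_Ico, Finset.range_eq_Ico]
        exact (Finset.sum_Ico_consecutive _ (Nat.zero_le _) (by omega)).symm
      have : ∑ k ∈ Finset.Ico (b+1) (n+1), (1 - U k - u k * μ) = 0 :=
        Finset.sum_eq_zero fun j hj => dzero j (by
          simp only [Finset.mem_Ico] at hj; omega)
      rw [hsplit, this, hSb] at hn
      linarith
  · intro h
    exact ⟨a, h⟩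
end

section
/- The discrete uniform distribution does not permit beneficial restart: if a ≤ b are natural numbers and u(n) = 1/(b − a + 1) for a ≤ n ≤ b with u(n) = 0 otherwise, then S(n) ≥ 0 for all n ≥ 0. -/
lemma gaussIcc_aux (a : ℕ) : ∀ b : ℕ, a ≤ b →
    (∑ i ∈ Finset.Icc a b, (i:ℝ)) * 2 = ((a:ℝ)+b)*((b:ℝ)+1-a) := by
  intro b
  induction b with
  | zero => intro h; interval_cases a; simp
  | succ b ih =>
    intro h
    rcases Nat.lt_or_ge a (b+1) with h'|h'
    · have hab : a ≤ b := by omega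
      rw [Finset.sum_Icc_succ_top (by omega : a ≤ b + 1)]
      have := ih hab
      push_cast
      push_cast at this
      nlinarith [this]
    · have hh : a = b+1 := by omega
      subst hh
      simp
      ring

theorem uniform_no_beneficial_restart
    (a b : ℕ) (hab : a ≤ b)
    (u : ℕ → ℝ)
    (hu : ∀ n, u n = if a ≤ n ∧ n ≤ b then 1 / ((b : ℝ) - a + 1) else 0)
    (μ : ℝ) (hμ : μ = ∑' n : ℕ, (n : ℝ) * u n)
    (U S : ℕ → ℝ)
    (hU : ∀ n, U n = ∑ k ∈ Finset.range (n + 1), u k)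
    (hS : ∀ n, S n = ∑ k ∈ Finset.range (n + 1), (1 - U k - u k * μ)) :
    ∀ n, 0 ≤ S n := by
  have ha : (a:ℝ) ≤ b := by exact_mod_cast hab
  have hb : (0:ℝ) < (b:ℝ) - a + 1 := by linarith
  set c : ℝ := 1 / ((b:ℝ) - a + 1) with hc
  have hcm : c * ((b:ℝ) - a + 1) = 1 := one_div_mul_cancel hb.ne'
  have hc0 : 0 < c := by positivity
  -- value of μ
  have hμ' : μ = ((a:ℝ) + b) / 2 := by
    rw [hμ]
    rw [tsum_eq_sum (s := Finset.range (b+1)) (by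
      intro n hn
      rw [hu, if_neg (by simp at hn; omega)]
      ring)]
    have h1 : ∀ n ∈ Finset.range (b+1), (n:ℝ) * u n
        = if n ∈ Finset.Icc a b then (n:ℝ)*c else 0 := by
      intro n _
      rw [hu]
      by_cases h : a ≤ n ∧ n ≤ b
      · rw [if_pos h, if_pos (Finset.mem_Icc.mpr h)]
      · rw [if_neg h, if_neg (by rw [Finset.mem_Icc]; exact h), mul_zero]
    rw [Finset.sum_congr rfl h1, Finset.sum_ite_mem]
    have h2 : Finset.range (b+1) ∩ Finset.Icc a b = Finset.Icc a b := by
      ext x; simp [Finset.mem_Icc]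
    rw [h2, ← Finset.sum_mul]
    have h3 := gaussIcc_aux a b hab
    rw [hc]
    field_simp
    nlinarith [h3]
  -- closed form for U
  have hU' : ∀ k, U k = ((min k b + 1 - a : ℕ) : ℝ) * c := by
    intro k
    rw [hU]
    have h1 : ∀ j ∈ Finset.range (k+1), u j
        = if j ∈ Finset.Icc a b then c else 0 := by
      intro j _
      rw [hu]
      by_cases h : a ≤ j ∧ j ≤ b
      · rw [if_pos h, if_pos (Finset.mem_Icc.mpr h)]
      · rw [if_neg h, if_neg (by rw [Finset.mem_Icc]; exact h)]
    rw [Finset.sum_congr rfl h1, Finset.sum_ite_mem]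
    have h2 : Finset.range (k+1) ∩ Finset.Icc a b = Finset.Icc a (min k b) := by
      ext x; simp [Finset.mem_Icc]; omega
    rw [h2, Finset.sum_const, Nat.card_Icc, nsmul_eq_mul]
  -- closed form for S
  have key : ∀ n, S n = (if n < a then (n:ℝ)+1 else if n ≤ b then
      (a:ℝ) + ((n:ℝ)-a+1) - c * ((n:ℝ)-a+1) * (((n:ℝ)-a+1) + 1 + a + b)/2 else 0) := by
    intro n
    induction n with
    | zero =>
      have hS0 : S 0 = 1 - U 0 - u 0 * μ := by rw [hS]; simp
      rw [hS0, hU' 0, hu 0, hμ']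
      by_cases h : a = 0
      · subst h
        simp
        ring
      · rw [if_neg (by omega), if_pos (by omega)]
        have : min 0 b + 1 - a = 0 := by omega
        rw [this]
        simp
    | succ n ih =>
      have hstep : S (n+1) = S n + (1 - U (n+1) - u (n+1) * μ) := by
        rw [hS (n+1), hS n, Finset.sum_range_succ]
      rw [hstep, ih, hU' (n+1), hu (n+1), hμ']
      rcases Nat.lt_or_ge (n+1) a with h1 | h1
      · rw [if_pos (show n < a by omega), if_pos (show n+1 < a by omega),
            if_neg (show ¬(a ≤ n+1 ∧ n+1 ≤ b) by omega)]
        have hm0 : min (n+1) b + 1 - a = 0 := by omega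
        rw [hm0]
        push_cast
        ring
      · rcases le_or_gt (n+1) b with h2 | h2
        · rw [if_pos (show a ≤ n+1 ∧ n+1 ≤ b from ⟨h1, h2⟩),
              if_neg (show ¬(n+1 < a) by omega), if_pos (show n+1 ≤ b from h2)]
          have hm : min (n+1) b = n+1 := by omega
          rw [hm]
          have hcast : ((n + 1 + 1 - a : ℕ) : ℝ) = (n:ℝ) + 2 - a := by
            push_cast [Nat.cast_sub (show a ≤ n+1+1 by omega)]
            ring
          rw [hcast]
          rcases Nat.lt_or_ge n a with h3 | h3
          · rw [if_pos h3]
            have hna : (a:ℝ) = (n:ℝ) + 1 := by exact_mod_cast (show a = n+1 by omega)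
            rw [hna]
            push_cast
            ring
          · rw [if_neg (show ¬(n < a) by omega), if_pos (show n ≤ b by omega)]
            push_cast
            ring
        · rw [if_neg (show ¬(a ≤ n+1 ∧ n+1 ≤ b) by omega),
              if_neg (show ¬(n+1 < a) by omega), if_neg (show ¬(n+1 ≤ b) by omega)]
          have hm : min (n+1) b = b := by omega
          rw [hm]
          have hcast : ((b + 1 - a : ℕ) : ℝ) = (b:ℝ) + 1 - a := by
            push_cast [Nat.cast_sub (show a ≤ b+1 by omega)]
            ring
          rw [hcast]
          rcases le_or_gt n b with h4 | h4
          · rw [if_neg (show ¬(n < a) by omega), if_pos h4]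
            have hnb : (n:ℝ) = b := by exact_mod_cast (show n = b by omega)
            rw [hnb]
            nlinarith [hcm]
          · rw [if_neg (show ¬(n < a) by omega), if_neg (show ¬(n ≤ b) by omega)]
            nlinarith [hcm]
  intro n
  rw [key n]
  split_ifs with h1 h2
  · positivity
  · -- a ≤ n ≤ b
    have hna : (a:ℝ) ≤ n := by exact_mod_cast (by omega : a ≤ n)
    have hnb : (n:ℝ) ≤ b := by exact_mod_cast h2
    have ht : (0:ℝ) ≤ ((b:ℝ) - a + 1) - ((n:ℝ)-a+1) := by linarith
    have ht2 : (0:ℝ) ≤ ((n:ℝ)-a+1) + 2*a := by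
      have h0 : (0:ℝ) ≤ a := Nat.cast_nonneg a
      linarith
    nlinarith [mul_nonneg (mul_nonneg hc0.le ht) ht2, hcm]
  · exact le_refl 0
end

section
/- Convex tail: suppose there exists M ∈ ℕ such that u(n+1) ≤ K·u(n) for all n ≥ M, where K := μ/(μ+1). Then S(n) ≥ 0 for all n ≥ M; in particular sharp restart at any time after M is not beneficial. -/
theorem convex_tail_nonneg
    (u : ℕ → ℝ) (hu0 : ∀ n, 0 ≤ u n) (hu1 : ∑' n, u n = 1)
    (hmean : Summable (fun n : ℕ => (n : ℝ) * u n))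
    (μ : ℝ) (hμ : μ = ∑' n : ℕ, (n : ℝ) * u n)
    (U S : ℕ → ℝ)
    (hU : ∀ n, U n = ∑ k ∈ Finset.range (n + 1), u k)
    (hS : ∀ n, S n = ∑ k ∈ Finset.range (n + 1), (1 - U k - u k * μ))
    (K : ℝ) (hK : K = μ / (μ + 1))
    (M : ℕ) (htail : ∀ n, M ≤ n → u (n + 1) ≤ K * u n) :
    ∀ n, M ≤ n → 0 ≤ S n := by
  have hu : Summable u := by
    by_contra h
    rw [tsum_eq_zero_of_not_summable h] at hu1
    norm_num at hu1
  have hμ0 : 0 ≤ μ := hμ ▸ tsum_nonneg fun n => mul_nonneg (Nat.cast_nonneg n) (hu0 n)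
  have hμ1 : (0:ℝ) < μ + 1 := by linarith
  have hK0 : 0 ≤ K := by rw [hK]; positivity
  have hK1 : K < 1 := by rw [hK, div_lt_one hμ1]; linarith
  have hKμ : K * (1 - K)⁻¹ = μ := by
    rw [hK]
    have h1K : 1 - μ / (μ + 1) = 1 / (μ + 1) := by field_simp; ring
    rw [h1K]
    field_simp
  -- tail function
  set T : ℕ → ℝ := fun k => ∑' j, u (k + 1 + j) with hTdef
  have hsum_shift : ∀ k : ℕ, Summable (fun j => u (k + j)) := by
    intro k
    have := (summable_nat_add_iff k).mpr hu
    simpa [add_comm] using this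
  have hTnonneg : ∀ k, 0 ≤ T k := fun k => tsum_nonneg fun j => hu0 _
  -- T k = 1 - U k
  have hTU : ∀ k, T k = 1 - U k := by
    intro k
    have h := Summable.sum_add_tsum_nat_add (f := u) (k + 1) hu
    rw [hu1] at h
    have : T k = ∑' j, u (j + (k + 1)) := by
      simp only [hTdef]
      exact tsum_congr fun j => by ring_nf
    rw [this, hU k]
    linarith
  -- pointwise geometric bound
  have hgeo : ∀ k, M ≤ k → ∀ j, u (k + 1 + j) ≤ K ^ (j + 1) * u k := by
    intro k hk j
    induction j with
    | zero => simpa using htail k hk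
    | succ j ih =>
      have h1 : u (k + 1 + j + 1) ≤ K * u (k + 1 + j) := htail _ (by omega)
      have h2 : K * u (k + 1 + j) ≤ K * (K ^ (j + 1) * u k) :=
        mul_le_mul_of_nonneg_left ih hK0
      calc u (k + 1 + (j + 1)) = u (k + 1 + j + 1) := by ring_nf
        _ ≤ K * (K ^ (j + 1) * u k) := h1.trans h2
        _ = K ^ (j + 1 + 1) * u k := by ring
  -- T k ≤ μ * u k for k ≥ M
  have hTle : ∀ k, M ≤ k → T k ≤ μ * u k := by
    intro k hk
    have hsL : Summable fun j => u (k + 1 + j) := hsum_shift (k + 1)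
    have hsR : Summable fun j : ℕ => K ^ (j + 1) * u k := by
      have := (summable_geometric_of_lt_one hK0 hK1).mul_right (K * u k)
      apply this.congr
      intro j
      ring
    have h1 : T k ≤ ∑' j : ℕ, K ^ (j + 1) * u k :=
      Summable.tsum_le_tsum (hgeo k hk) hsL hsR
    have h2 : ∑' j : ℕ, K ^ (j + 1) * u k = K * (1 - K)⁻¹ * u k := by
      rw [show (fun j : ℕ => K ^ (j + 1) * u k) = fun j : ℕ => K ^ j * (K * u k) from
        funext fun j => by ring, tsum_mul_right, tsum_geometric_of_lt_one hK0 hK1]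
      ring
    rw [h2, hKμ] at h1
    exact h1
  -- Summable T
  have hTsummable : Summable T := by
    rw [← summable_nat_add_iff M]
    apply Summable.of_nonneg_of_le (fun k => hTnonneg _)
      (fun k => hTle (k + M) (by omega))
    exact ((summable_nat_add_iff M).mpr hu).mul_left μ
  -- Fubini : ∑' k, T k = μ
  have hFubini : ∑' k, T k = μ := by
    set G : ℕ → ℕ → ℝ := fun n k => if k < n then u n else 0 with hGdef
    have hGnn : ∀ p : ℕ × ℕ, 0 ≤ (fun p : ℕ × ℕ => G p.1 p.2) p := by
      intro p
      simp only [hGdef]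
      split
      · exact hu0 _
      · exact le_refl 0
    have hzero : ∀ n : ℕ, ∀ k ∉ Finset.range n, G n k = 0 := by
      intro n k hk
      simp only [hGdef]
      rw [if_neg (by simpa using hk)]
    have hrow : ∀ n : ℕ, ∑' k, G n k = (n : ℝ) * u n := by
      intro n
      rw [tsum_eq_sum (hzero n)]
      have he : ∀ k ∈ Finset.range n, G n k = u n := by
        intro k hk
        simp only [hGdef]
        rw [if_pos (Finset.mem_range.mp hk)]
      rw [Finset.sum_congr rfl he, Finset.sum_const, Finset.card_range, nsmul_eq_mul]
    have hinj : ∀ k : ℕ, Function.Injective (fun j : ℕ => k + 1 + j) := by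
      intro k a b h
      simpa using h
    have hsupp : ∀ k : ℕ, Function.support (fun n => G n k) ⊆
        Set.range (fun j : ℕ => k + 1 + j) := by
      intro k x hx
      have hlt : k < x := by
        by_contra hc
        apply hx
        simp only [hGdef]
        rw [if_neg hc]
      exact ⟨x - (k + 1), by show k + 1 + (x - (k + 1)) = x; omega⟩
    have hcolval : ∀ k j : ℕ, G (k + 1 + j) k = u (k + 1 + j) := by
      intro k j
      simp only [hGdef]
      rw [if_pos (by omega)]
    have hcol : ∀ k, ∑' n, G n k = T k := by
      intro k
      rw [hTdef, ← (hinj k).tsum_eq (hsupp k)]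
      exact tsum_congr fun j => hcolval k j
    have hGs : Summable (Function.uncurry G) := by
      refine (summable_prod_of_nonneg hGnn).mpr ⟨fun n => summable_of_ne_finset_zero (hzero n), ?_⟩
      apply hmean.congr
      intro n
      exact (hrow n).symm
    have hcolsum : ∀ k : ℕ, Summable (fun n => G n k) := by
      intro k
      refine (Function.Injective.summable_iff (hinj k) ?_).mp ?_
      · intro x hx
        by_contra h0
        exact hx (hsupp k h0)
      · exact (hsum_shift (k + 1)).congr fun j => (hcolval k j).symm
    have hrowsum : ∀ n : ℕ, Summable (G n) :=
      fun n => summable_of_ne_finset_zero (hzero n)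
    have := Summable.tsum_comm' hGs hrowsum hcolsum
    calc ∑' k, T k = ∑' k, ∑' n, G n k := tsum_congr fun k => (hcol k).symm
      _ = ∑' n, ∑' k, G n k := this
      _ = ∑' n : ℕ, (n : ℝ) * u n := tsum_congr hrow
      _ = μ := hμ.symm
  -- f := T - μ u, summable with tsum 0
  set f : ℕ → ℝ := fun k => T k - μ * u k with hfdef
  have hfs : Summable f := hTsummable.sub (hu.mul_left μ)
  have hftsum : ∑' k, f k = 0 := by
    have h1 : ∑' k, (T k - μ * u k) = (∑' k, T k) - ∑' k, μ * u k :=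
      Summable.tsum_sub hTsummable (hu.mul_left μ)
    have h2 : ∑' k : ℕ, μ * u k = μ := by rw [tsum_mul_left, hu1, mul_one]
    calc ∑' k, f k = ∑' k, (T k - μ * u k) := rfl
      _ = μ - μ := by rw [h1, h2, hFubini]
      _ = 0 := by ring
  intro n hn
  have hSn : S n = ∑ k ∈ Finset.range (n + 1), f k := by
    rw [hS n]
    apply Finset.sum_congr rfl
    intro k _
    have := hTU k
    simp only [hfdef]
    linarith
  have h := Summable.sum_add_tsum_nat_add (f := f) (n + 1) hfs
  rw [hftsum, ← hSn] at h
  have htail0 : ∑' i, f (i + (n + 1)) ≤ 0 := by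
    apply tsum_nonpos
    intro i
    have : T (i + (n + 1)) ≤ μ * u (i + (n + 1)) := hTle _ (by omega)
    simp only [hfdef]
    linarith
  linarith
end

section
/- Concave tail: suppose there exists M ∈ ℕ such that u(n+1) > K·u(n) for all n ≥ M, where K := μ/(μ+1). Then S(n) < 0 for all n ≥ M; in particular sharp restart at any time after M is beneficial. -/
theorem concave_tail_neg
    (u : ℕ → ℝ) (hu0 : ∀ n, 0 ≤ u n) (hu1 : ∑' n, u n = 1)
    (hmean : Summable (fun n : ℕ => (n : ℝ) * u n))
    (μ : ℝ) (hμ : μ = ∑' n : ℕ, (n : ℝ) * u n)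
    (U S : ℕ → ℝ)
    (hU : ∀ n, U n = ∑ k ∈ Finset.range (n + 1), u k)
    (hS : ∀ n, S n = ∑ k ∈ Finset.range (n + 1), (1 - U k - u k * μ))
    (K : ℝ) (hK : K = μ / (μ + 1))
    (M : ℕ) (htail : ∀ n, M ≤ n → K * u n < u (n + 1)) :
    ∀ n, M ≤ n → S n < 0 := by
  -- basic facts
  have husum : Summable u := by
    by_contra h
    rw [tsum_eq_zero_of_not_summable h] at hu1
    norm_num at hu1
  have hμ0 : 0 ≤ μ := by
    rw [hμ]
    exact tsum_nonneg fun n => mul_nonneg (Nat.cast_nonneg n) (hu0 n)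
  have hμ1 : (0:ℝ) < μ + 1 := by linarith
  have hK0 : 0 ≤ K := by rw [hK]; positivity
  have hK1 : K < 1 := by
    rw [hK, div_lt_one hμ1]; linarith
  have h1K : (0:ℝ) < 1 - K := by linarith
  have hKμ : μ * (1 - K) = K := by
    rw [hK]; field_simp; ring
  -- tail formula
  have htailf : ∀ k, 1 - U k = ∑' i, u (i + (k + 1)) := by
    intro k
    have h := Summable.sum_add_tsum_nat_add (f := u) (k + 1) husum
    rw [hu1, ← hU k] at h
    linarith
  have htsummable : ∀ k : ℕ, Summable (fun i => u (i + k)) :=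
    fun k => (summable_nat_add_iff k).mpr husum
  have hmsummable : ∀ k : ℕ, Summable (fun i => ((i + k : ℕ) : ℝ) * u (i + k)) :=
    fun k => (summable_nat_add_iff k).mpr hmean
  -- key positivity: terms of S are positive past M
  have key : ∀ k, M ≤ k → u k * μ < 1 - U k := by
    intro k hk
    have hgeo : ∀ i, K ^ i * u (k + 1) ≤ u (i + (k + 1)) := by
      intro i
      induction i with
      | zero => simp
      | succ i ih =>
        have ht := htail (i + (k + 1)) (by omega)
        have h1 : K * (K ^ i * u (k + 1)) ≤ K * u (i + (k + 1)) :=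
          mul_le_mul_of_nonneg_left ih hK0
        have hidx : i + 1 + (k + 1) = i + (k + 1) + 1 := by omega
        rw [hidx]
        calc K ^ (i + 1) * u (k + 1) = K * (K ^ i * u (k + 1)) := by ring
          _ ≤ K * u (i + (k + 1)) := h1
          _ ≤ u (i + (k + 1) + 1) := le_of_lt ht
    have hsumgeo : Summable (fun i : ℕ => K ^ i * u (k + 1)) :=
      (summable_geometric_of_lt_one hK0 hK1).mul_right _
    have h1 : ∑' i, K ^ i * u (k + 1) ≤ ∑' i, u (i + (k + 1)) :=
      Summable.tsum_le_tsum hgeo hsumgeo (htsummable (k + 1))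
    have h2 : ∑' i : ℕ, K ^ i * u (k + 1) = u (k + 1) / (1 - K) := by
      rw [tsum_mul_right, tsum_geometric_of_lt_one hK0 hK1]
      ring
    have h3 : u k * μ < u (k + 1) / (1 - K) := by
      rw [lt_div_iff₀ h1K]
      have ht := htail k hk
      have h4 : u k * μ * (1 - K) = K * u k := by
        calc u k * μ * (1 - K) = u k * (μ * (1 - K)) := by ring
          _ = K * u k := by rw [hKμ]; ring
      linarith
    rw [htailf k]
    calc u k * μ < u (k + 1) / (1 - K) := h3
      _ = ∑' i : ℕ, K ^ i * u (k + 1) := h2.symm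
      _ ≤ ∑' i, u (i + (k + 1)) := h1
  -- closed form for S
  have hSform : ∀ n, S n = (n + 1 : ℝ) * (1 - U n)
      + (∑ j ∈ Finset.range (n + 1), (j : ℝ) * u j) - μ * U n := by
    intro n
    induction n with
    | zero => simp [hS, hU, Finset.sum_range_one]; ring
    | succ n ih =>
      have hSstep : S (n + 1) = S n + (1 - U (n + 1) - u (n + 1) * μ) := by
        rw [hS, hS, Finset.sum_range_succ]
      have hUstep : U (n + 1) = U n + u (n + 1) := by
        rw [hU, hU, Finset.sum_range_succ]
      rw [hSstep, ih, Finset.sum_range_succ (fun j => (j : ℝ) * u j) (n + 1), hUstep]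
      push_cast
      ring
  -- limits
  have hUlim : Filter.Tendsto (fun n => U n) Filter.atTop (nhds 1) := by
    have h := husum.hasSum.tendsto_sum_nat
    rw [hu1] at h
    have h2 := h.comp (Filter.tendsto_add_atTop_nat 1)
    simpa only [Function.comp_def, hU] using h2
  have hmlim : Filter.Tendsto (fun n => ∑ j ∈ Finset.range (n + 1), (j : ℝ) * u j)
      Filter.atTop (nhds μ) := by
    have h := hmean.hasSum.tendsto_sum_nat
    rw [← hμ] at h
    exact h.comp (Filter.tendsto_add_atTop_nat 1)
  have htail0 : Filter.Tendsto (fun n : ℕ => (n + 1 : ℝ) * (1 - U n)) Filter.atTop (nhds 0) := by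
    have hub : ∀ n : ℕ, (n + 1 : ℝ) * (1 - U n) ≤ μ - ∑ j ∈ Finset.range (n + 1), (j : ℝ) * u j := by
      intro n
      have h := Summable.sum_add_tsum_nat_add (f := fun j : ℕ => (j : ℝ) * u j) (n + 1) hmean
      rw [← hμ] at h
      have htailμ : μ - ∑ j ∈ Finset.range (n + 1), (j : ℝ) * u j
          = ∑' i, ((i + (n + 1) : ℕ) : ℝ) * u (i + (n + 1)) := by
        rw [← h]; ring
      rw [htailμ, htailf n, ← tsum_mul_left]
      refine Summable.tsum_le_tsum (fun i => ?_) ((htsummable (n + 1)).mul_left _) (hmsummable (n + 1))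
      have : ((n : ℝ) + 1) ≤ ((i + (n + 1) : ℕ) : ℝ) := by push_cast; linarith [Nat.cast_nonneg (α := ℝ) i]
      exact mul_le_mul_of_nonneg_right this (hu0 _)
    have hlb : ∀ n : ℕ, (0:ℝ) ≤ (n + 1 : ℝ) * (1 - U n) := by
      intro n
      have : (0:ℝ) ≤ 1 - U n := by
        rw [htailf n]
        exact tsum_nonneg fun i => hu0 _
      positivity
    have hublim : Filter.Tendsto
        (fun n => μ - ∑ j ∈ Finset.range (n + 1), (j : ℝ) * u j) Filter.atTop (nhds 0) := by
      have := Filter.Tendsto.sub (tendsto_const_nhds (x := μ)) hmlim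
      simpa using this
    exact squeeze_zero hlb hub hublim
  have hSlim : Filter.Tendsto (fun n => S n) Filter.atTop (nhds 0) := by
    have h := (htail0.add hmlim).sub (hUlim.const_mul μ)
    have he : (fun n : ℕ => (n + 1 : ℝ) * (1 - U n)
        + (∑ j ∈ Finset.range (n + 1), (j : ℝ) * u j) - μ * U n) = fun n => S n := by
      funext n; rw [hSform n]
    rw [he] at h
    simpa using h
  -- conclusion
  intro n hn
  have hstep : S (n + 1) = S n + (1 - U (n + 1) - u (n + 1) * μ) := by
    rw [hS, hS, Finset.sum_range_succ]
  have hposn1 : 0 < 1 - U (n + 1) - u (n + 1) * μ := by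
    have := key (n + 1) (by omega); linarith
  have hmono : ∀ m, n + 1 ≤ m → S (n + 1) ≤ S m := by
    intro m hm
    have hsub : S m - S (n + 1) = ∑ k ∈ Finset.Ico (n + 2) (m + 1), (1 - U k - u k * μ) := by
      rw [hS, hS, Finset.sum_Ico_eq_sub _ (by omega)]
    have hnn : 0 ≤ ∑ k ∈ Finset.Ico (n + 2) (m + 1), (1 - U k - u k * μ) := by
      refine Finset.sum_nonneg fun k hk => ?_
      have hk' : M ≤ k := by
        have := (Finset.mem_Ico.mp hk).1; omega
      have := key k hk'; linarith
    linarith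
  have hle : S (n + 1) ≤ 0 :=
    ge_of_tendsto hSlim (Filter.eventually_atTop.mpr ⟨n + 1, hmono⟩)
  have := key (n + 1) (by omega)
  linarith
end

section
/- A first-passage time with log-concave PMF does not permit beneficial restart: suppose u satisfies u(n)² ≥ u(n−1)·u(n+1) for all n ≥ 1 and has no internal zeros (whenever m < k < n with u(m) > 0 and u(n) > 0, also u(k) > 0). Then S(n) ≥ 0 for all n ≥ 0. -/
open Finset

theorem log_concave_no_beneficial_restart
    (u : ℕ → ℝ) (hu0 : ∀ n, 0 ≤ u n) (hu1 : ∑' n, u n = 1)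
    (hmean : Summable (fun n : ℕ => (n : ℝ) * u n))
    (μ : ℝ) (hμ : μ = ∑' n : ℕ, (n : ℝ) * u n)
    (U S : ℕ → ℝ)
    (hU : ∀ n, U n = ∑ k ∈ Finset.range (n + 1), u k)
    (hS : ∀ n, S n = ∑ k ∈ Finset.range (n + 1), (1 - U k - u k * μ))
    (hlogconcave : ∀ n, 1 ≤ n → u (n - 1) * u (n + 1) ≤ (u n) ^ 2)
    (hnointernalzeros : ∀ m k n, m < k → k < n → 0 < u m → 0 < u n → 0 < u k) :
    ∀ n, 0 ≤ S n := by
  have hsum : Summable u := by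
    by_contra h
    rw [tsum_eq_zero_of_not_summable h] at hu1
    norm_num at hu1
  set G : ℕ → ℝ := fun n => ∑' j, u (j + n) with hG
  have hsumG : ∀ n, Summable (fun j => u (j + n)) := fun n => (summable_nat_add_iff n).2 hsum
  have G0 : G 0 = 1 := by simp only [hG, add_zero]; exact hu1
  have Gnonneg : ∀ n, 0 ≤ G n := fun n => tsum_nonneg fun j => hu0 _
  have Grec : ∀ n, G n = u n + G (n + 1) := by
    intro n
    have h := Summable.tsum_eq_zero_add (hsumG n)
    simp only [hG]
    rw [h]
    congr 1
    · simp
    · exact tsum_congr fun j => by congr 1; omega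
  have Gstep : ∀ n, G (n + 1) ≤ G n := fun n => by
    have := Grec n; have := hu0 n; linarith
  have Gmono : ∀ a b : ℕ, a ≤ b → G b ≤ G a := by
    intro a b
    induction b with
    | zero =>
      intro hab
      have h : a = 0 := by omega
      subst h
      exact le_rfl
    | succ b ih =>
      intro hab
      rcases Nat.lt_or_ge a (b + 1) with h | h
      · exact le_trans (Gstep b) (ih (by omega))
      · have h2 : a = b + 1 := by omega
        exact le_of_eq (by rw [h2])
  -- Lemma A : chained log-concavity
  have lemA : ∀ n j : ℕ, u n * u (n + 1 + j) ≤ u (n + 1) * u (n + j) := by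
    intro n j
    induction j with
    | zero => simp [mul_comm]
    | succ j ih =>
      have hlc := hlogconcave (n + j + 1) (by omega)
      have hlc' : u (n + j) * u (n + j + 2) ≤ u (n + j + 1) ^ 2 := by
        have e1 : n + j + 1 - 1 = n + j := by omega
        have e2 : n + j + 1 + 1 = n + j + 2 := by omega
        rwa [e1, e2] at hlc
      have e3 : n + 1 + (j + 1) = n + j + 2 := by omega
      have e4 : n + (j + 1) = n + j + 1 := by omega
      rw [e3, e4]
      rcases eq_or_lt_of_le (hu0 (n + j + 1)) with h1 | h1
      · -- u (n+j+1) = 0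
        have hz : u n * u (n + j + 2) = 0 := by
          rcases eq_or_lt_of_le (hu0 n) with h2 | h2
          · rw [← h2]; ring
          rcases eq_or_lt_of_le (hu0 (n + j + 2)) with h3 | h3
          · rw [← h3]; ring
          · exact absurd (hnointernalzeros n (n + j + 1) (n + j + 2) (by omega) (by omega) h2 h3)
              (by rw [← h1]; exact lt_irrefl 0)
        rw [hz]
        exact mul_nonneg (hu0 _) (hu0 _)
      · rcases eq_or_lt_of_le (hu0 (n + j)) with h2 | h2
        · -- u (n+j) = 0 ⇒ u n = 0
          have hn0 : u n = 0 := by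
            rcases eq_or_lt_of_le (hu0 n) with h3 | h3
            · exact h3.symm
            · rcases Nat.lt_or_ge n (n + j) with h4 | h4
              · exact absurd (hnointernalzeros n (n + j) (n + j + 1) h4 (by omega) h3 h1)
                  (by rw [← h2]; exact lt_irrefl 0)
              · have : n = n + j := by omega
                rw [this] at h3; linarith
          rw [hn0, zero_mul]
          exact mul_nonneg (hu0 _) (hu0 _)
        · -- both positive: cancel u (n+j)
          have key : u n * u (n + j + 2) * u (n + j) ≤ u (n + 1) * u (n + j + 1) * u (n + j) := by
            have e5 : n + 1 + j = n + j + 1 := by omega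
            rw [e5] at ih
            nlinarith [hu0 n, hu0 (n + 1), hu0 (n + j + 1), hu0 (n + j + 2)]
          exact le_of_mul_le_mul_right key h2
  -- Lemma B : hazard monotonicity
  have lemB : ∀ n, u n * G (n + 1) ≤ u (n + 1) * G n := by
    intro n
    simp only [hG]
    rw [← tsum_mul_left, ← tsum_mul_left]
    refine Summable.tsum_le_tsum (fun j => ?_) ((hsumG (n+1)).mul_left _) ((hsumG n).mul_left _)
    have := lemA n j
    have e1 : j + (n + 1) = n + 1 + j := by omega
    have e2 : j + n = n + j := by omega
    rw [e1, e2]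
    exact this
  -- Lemma C : tail log-concavity
  have lemC : ∀ n, G n * G (n + 2) ≤ G (n + 1) ^ 2 := by
    intro n
    have h1 := lemB n
    have h2 := Grec n
    have h3 := Grec (n + 1)
    nlinarith [Gnonneg n, Gnonneg (n + 1), hu0 n, hu0 (n + 1)]
  -- Lemma E : cross inequality
  have lemE : ∀ d b : ℕ, G (b + d + 1) * G b ≤ G (b + d) * G (b + 1) := by
    intro d
    induction d with
    | zero => intro b; simp [mul_comm]
    | succ d ih =>
      intro b
      rcases eq_or_lt_of_le (Gnonneg (b + d)) with h0 | h0
      · have hz : G (b + d + 1 + 1) = 0 := le_antisymm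
          (le_trans (Gmono (b + d) (b + d + 1 + 1) (by omega)) (le_of_eq h0.symm)) (Gnonneg _)
        have e : b + (d + 1) + 1 = b + d + 1 + 1 := by omega
        rw [e, hz, zero_mul]
        exact mul_nonneg (Gnonneg _) (Gnonneg _)
      · have hC := lemC (b + d)
        have hI := ih b
        have e : b + (d + 1) = b + d + 1 := by omega
        rw [e]
        have key : G (b + d + 1 + 1) * G b * G (b + d) ≤ G (b + d + 1) * G (b + 1) * G (b + d) := by
          have e2 : b + d + 2 = b + d + 1 + 1 := by omega
          rw [e2] at hC
          nlinarith [Gnonneg b, Gnonneg (b + 1), Gnonneg (b + d + 1), Gnonneg (b + d + 1 + 1)]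
        exact le_of_mul_le_mul_right key h0
  -- Lemma F : submultiplicativity
  have lemF : ∀ m n : ℕ, G (m + n) ≤ G m * G n := by
    intro m n
    induction n with
    | zero => rw [G0, mul_one]; exact Gmono m (m + 0) (by omega)
    | succ n ih =>
      rcases eq_or_lt_of_le (Gnonneg n) with h0 | h0
      · have hz : G (m + (n + 1)) = 0 := le_antisymm
          (le_trans (Gmono n (m + (n + 1)) (by omega)) (le_of_eq h0.symm)) (Gnonneg _)
        rw [hz]
        exact mul_nonneg (Gnonneg _) (Gnonneg _)
      · have hE := lemE m n
        have key : G (m + (n + 1)) * G n ≤ G m * G (n + 1) * G n := by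
          rw [show n + m + 1 = m + (n + 1) from by omega, show n + m = m + n from by omega] at hE
          nlinarith [Gnonneg (n + 1), Gnonneg m, mul_le_mul_of_nonneg_right ih (Gnonneg (n + 1))]
        exact le_of_mul_le_mul_right key h0
  -- finite identity
  set w : ℕ → ℝ := fun m => (m : ℝ) * u m with hw
  have ident : ∀ n : ℕ, ∑ k ∈ range n, G (k + 1) =
      (∑ m ∈ range (n + 1), w m) + (n : ℝ) * G (n + 1) := by
    intro n
    induction n with
    | zero => simp [hw]
    | succ n ih =>
      rw [sum_range_succ, ih, sum_range_succ (n := n + 1)]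
      have h := Grec (n + 1)
      simp only [hw]
      push_cast
      nlinarith [h]
  -- tail bound on w
  have hwnonneg : ∀ m, 0 ≤ w m := fun m => mul_nonneg (by positivity) (hu0 m)
  have hsumw_shift : ∀ n : ℕ, Summable (fun j => w (j + n)) :=
    fun n => (summable_nat_add_iff n).2 hmean
  have tailw : ∀ n : ℕ, (∑ m ∈ range (n + 1), w m) + ∑' j, w (j + (n + 1)) = μ := by
    intro n
    rw [hμ]
    exact Summable.sum_add_tsum_nat_add (n + 1) hmean
  have tailGbound : ∀ n : ℕ, (n : ℝ) * G (n + 1) ≤ ∑' j, w (j + (n + 1)) := by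
    intro n
    simp only [hG]
    rw [← tsum_mul_left]
    refine Summable.tsum_le_tsum (fun j => ?_) ((hsumG (n+1)).mul_left _) (hsumw_shift (n + 1))
    simp only [hw]
    have : (n : ℝ) ≤ ((j + (n + 1) : ℕ) : ℝ) := by push_cast; linarith [Nat.cast_nonneg (α := ℝ) j]
    exact mul_le_mul_of_nonneg_right this (hu0 _)
  have partial_le : ∀ n : ℕ, ∑ k ∈ range n, G (k + 1) ≤ μ := by
    intro n
    rw [ident n]
    have h1 := tailGbound n
    have h2 := tailw n
    linarith
  have hg : Summable (fun k => G (k + 1)) :=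
    summable_of_sum_range_le (fun n => Gnonneg (n + 1)) partial_le
  have μnonneg : 0 ≤ μ := by
    rw [hμ]; exact tsum_nonneg hwnonneg
  have tsumg_le : ∑' k, G (k + 1) ≤ μ := Summable.tsum_le_of_sum_range_le hg partial_le
  have μ_le_tsumg : μ ≤ ∑' k, G (k + 1) := by
    rw [hμ]
    refine Summable.tsum_le_of_sum_range_le hmean (fun n => ?_)
    calc ∑ m ∈ range n, w m ≤ ∑ m ∈ range (n + 1), w m := by
          rw [sum_range_succ]; linarith [hwnonneg n]
      _ ≤ ∑ k ∈ range n, G (k + 1) := by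
          rw [ident n]
          nlinarith [Gnonneg (n + 1), Nat.cast_nonneg (α := ℝ) n]
      _ ≤ ∑' k, G (k + 1) := Summable.sum_le_tsum _ (fun k _ => Gnonneg (k + 1)) hg
  have tsumg : ∑' k, G (k + 1) = μ := le_antisymm tsumg_le μ_le_tsumg
  -- U in terms of G
  have hUG : ∀ n, U n + G (n + 1) = 1 := by
    intro n
    rw [hU n, ← hu1]
    exact Summable.sum_add_tsum_nat_add (n + 1) hsum
  -- S in terms of G
  intro n
  have hSG : S n = ∑ k ∈ range (n + 1), G (k + 1) - μ * U n := by
    rw [hS n]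
    have : ∀ k, (1 : ℝ) - U k - u k * μ = G (k + 1) - u k * μ := by
      intro k; have := hUG k; linarith
    rw [Finset.sum_congr rfl (fun k _ => this k), Finset.sum_sub_distrib, ← Finset.sum_mul,
      ← hU n]
    ring
  -- tail of g
  have tailg : (∑ k ∈ range (n + 1), G (k + 1)) + ∑' j, G (j + (n + 1) + 1) = μ := by
    rw [← tsumg]
    exact Summable.sum_add_tsum_nat_add (n + 1) hg
  have tailg_bound : ∑' j, G (j + (n + 1) + 1) ≤ G (n + 1) * μ := by
    have hsg : Summable (fun j => G (j + (n + 1) + 1)) := by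
      have : Summable (fun j => G (j + (n + 1) + 1)) := by
        have h := (summable_nat_add_iff (f := fun k => G (k + 1)) (n + 1)).2 hg
        exact h
      exact this
    calc ∑' j, G (j + (n + 1) + 1) ≤ ∑' j, G (n + 1) * G (j + 1) := by
          refine Summable.tsum_le_tsum (fun j => ?_) hsg (hg.mul_left _)
          have := lemF (n + 1) (j + 1)
          have e : j + (n + 1) + 1 = (n + 1) + (j + 1) := by omega
          rw [e]
          exact this
      _ = G (n + 1) * μ := by rw [tsum_mul_left, tsumg]
  -- conclude
  have hUn : U n = 1 - G (n + 1) := by have := hUG n; linarith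
  rw [hSG, hUn]
  nlinarith [Gnonneg (n + 1)]
end

section
/- A first-passage time with log-convex PMF either is geometric or permits beneficial restart at every time: suppose u(n) > 0 for all n ≥ 0 and u(n)² ≤ u(n−1)·u(n+1) for all n ≥ 1 (log-convexity), and u has finite mean μ. Then either there exists ρ ∈ (0,1) with u(n) = ρ·(1−ρ)^n for all n (in which case S(n) = 0 for all n), or S(n) < 0 for all n ≥ 0 (so every non-preemptive sharp restart is beneficial). -/
/-!
Write `T n = ∑_{i ≥ n} u i` for the tail of `u`. Cauchy–Schwarz carries the log-convexity of `u`
over to `T`, so the ratio `T (n + 1) / T n` is nondecreasing and `T` is supermultiplicative: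
`T a * T b ≤ T (a + b)`. Since `μ = ∑_{j ≥ 1} T j`, the restart sequence is
`S n = ∑_{j ≥ 1} (T (n + 1) * T j - T (n + 1 + j))`, a sum of nonpositive terms. If the ratio is
constant, `T` is geometric and every term vanishes; otherwise the ratio increases somewhere, and
then `T (n + 1) * T j < T (n + 1 + j)` for all large `j`, so `S n < 0`.
-/

open Finset

noncomputable def tailSum (u : ℕ → ℝ) (n : ℕ) : ℝ := ∑' i, u (i + n)

noncomputable def stepRatio (f : ℕ → ℝ) (n : ℕ) : ℝ := f (n + 1) / f n

theorem tsum_sq_le_tsum_mul_tsum_of_sq_le_mul {ι : Type*} {r f g : ι → ℝ} (hr : ∀ i, 0 ≤ r i)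
    (hf : ∀ i, 0 ≤ f i) (hg : ∀ i, 0 ≤ g i) (hfs : Summable f) (hgs : Summable g)
    (h : ∀ i, r i ^ 2 ≤ f i * g i) : (∑' i, r i) ^ 2 ≤ (∑' i, f i) * ∑' i, g i := by
  have hfg : 0 ≤ (∑' i, f i) * ∑' i, g i := mul_nonneg (tsum_nonneg hf) (tsum_nonneg hg)
  refine (Real.le_sqrt (tsum_nonneg hr) hfg).1 <| tsum_le_of_sum_le' (Real.sqrt_nonneg _) fun s =>
    Real.le_sqrt_of_sq_le ?_
  calc (∑ i ∈ s, r i) ^ 2 ≤ (∑ i ∈ s, f i) * ∑ i ∈ s, g i :=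
        sum_sq_le_sum_mul_sum_of_sq_le_mul s (fun i _ => hf i) (fun i _ => hg i) fun i _ => h i
    _ ≤ (∑' i, f i) * ∑' i, g i :=
        mul_le_mul (hfs.sum_le_tsum s fun i _ => hf i) (hgs.sum_le_tsum s fun i _ => hg i)
          (sum_nonneg fun i _ => hg i) (tsum_nonneg hf)

section StepRatio

variable {f : ℕ → ℝ}

theorem succ_eq_stepRatio_mul (hf : ∀ n, 0 < f n) (n : ℕ) : f (n + 1) = stepRatio f n * f n :=
  (div_mul_cancel₀ _ (hf n).ne').symm

theorem monotone_stepRatio (hf : ∀ n, 0 < f n) (hlc : ∀ n, f (n + 1) ^ 2 ≤ f n * f (n + 2)) :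
    Monotone (stepRatio f) :=
  monotone_nat_of_le_succ fun n => by
    rw [stepRatio, stepRatio, div_le_div_iff₀ (hf n) (hf (n + 1))]
    nlinarith [hlc n]

theorem eq_mul_stepRatio_pow (hf : ∀ n, 0 < f n) (hconst : ∀ n, stepRatio f n = stepRatio f 0)
    (n : ℕ) : f n = f 0 * stepRatio f 0 ^ n := by
  induction n with
  | zero => simp
  | succ n ih => rw [succ_eq_stepRatio_mul hf, hconst, ih]; ring

theorem mul_le_mul_add_of_monotone_stepRatio (hf : ∀ n, 0 < f n) (hr : Monotone (stepRatio f))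
    (a b : ℕ) : f a * f b ≤ f 0 * f (a + b) := by
  induction a with
  | zero => simp
  | succ a ih =>
    rw [Nat.add_right_comm, succ_eq_stepRatio_mul hf, succ_eq_stepRatio_mul hf (a + b)]
    have hra : 0 ≤ stepRatio f a := div_nonneg (hf _).le (hf _).le
    calc stepRatio f a * f a * f b = stepRatio f a * (f a * f b) := mul_assoc ..
      _ ≤ stepRatio f (a + b) * (f 0 * f (a + b)) :=
          mul_le_mul (hr (Nat.le_add_right a b)) ih (mul_nonneg (hf _).le (hf _).le)
            (hra.trans (hr (Nat.le_add_right a b)))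
      _ = f 0 * (stepRatio f (a + b) * f (a + b)) := by ring

theorem mul_lt_mul_add_of_stepRatio_lt (hf : ∀ n, 0 < f n) (hr : Monotone (stepRatio f))
    {b : ℕ} (hb : stepRatio f 0 < stepRatio f b) (a : ℕ) :
    f (a + 1) * f b < f 0 * f (a + 1 + b) := by
  induction a with
  | zero =>
    rw [zero_add, add_comm, succ_eq_stepRatio_mul hf, succ_eq_stepRatio_mul hf b]
    nlinarith [mul_pos (hf 0) (hf b)]
  | succ a ih =>
    rw [Nat.add_right_comm (a + 1), succ_eq_stepRatio_mul hf (a + 1),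
      succ_eq_stepRatio_mul hf (a + 1 + b)]
    have hra : 0 < stepRatio f (a + 1) := div_pos (hf _) (hf _)
    calc stepRatio f (a + 1) * f (a + 1) * f b = stepRatio f (a + 1) * (f (a + 1) * f b) :=
          mul_assoc ..
      _ < stepRatio f (a + 1) * (f 0 * f (a + 1 + b)) := mul_lt_mul_of_pos_left ih hra
      _ ≤ stepRatio f (a + 1 + b) * (f 0 * f (a + 1 + b)) :=
          mul_le_mul_of_nonneg_right (hr (Nat.le_add_right _ b)) (mul_pos (hf _) (hf _)).le
      _ = f 0 * (stepRatio f (a + 1 + b) * f (a + 1 + b)) := by ring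

end StepRatio

section TailSum

variable {u : ℕ → ℝ}

theorem sum_range_add_tailSum (hs : Summable u) (n : ℕ) :
    ∑ i ∈ range n, u i + tailSum u n = ∑' i, u i :=
  hs.sum_add_tsum_nat_add n

theorem tailSum_eq_add_tailSum_succ (hs : Summable u) (n : ℕ) :
    tailSum u n = u n + tailSum u (n + 1) := by
  have h := sum_range_add_tailSum hs (n + 1)
  rw [sum_range_succ, ← sum_range_add_tailSum hs n] at h
  linarith

theorem tailSum_pos (hs : Summable u) (hu : ∀ n, 0 < u n) (n : ℕ) : 0 < tailSum u n :=
  ((summable_nat_add_iff n).2 hs).tsum_pos (fun _ => (hu _).le) 0 (hu _)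

theorem tailSum_succ_sq_le (hu : ∀ n, 0 ≤ u n) (hs : Summable u)
    (hlc : ∀ n, u (n + 1) ^ 2 ≤ u n * u (n + 2)) (n : ℕ) :
    tailSum u (n + 1) ^ 2 ≤ tailSum u n * tailSum u (n + 2) :=
  tsum_sq_le_tsum_mul_tsum_of_sq_le_mul (fun _ => hu _) (fun _ => hu _) (fun _ => hu _)
    ((summable_nat_add_iff n).2 hs) ((summable_nat_add_iff (n + 2)).2 hs)
    fun i => by simpa only [← add_assoc] using hlc (i + n)

theorem hasSum_tailSum_succ (hu : ∀ n, 0 ≤ u n) (hs : Summable u)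
    (hmean : Summable fun n : ℕ => (n : ℝ) * u n) :
    HasSum (fun j => tailSum u (j + 1)) (∑' n : ℕ, (n : ℝ) * u n) := by
  set F : ℕ × ℕ → ℝ := fun p => if p.2 < p.1 then u p.1 else 0
  have hrow : ∀ i, HasSum (fun j => F (i, j)) (i * u i) := fun i => by
    have h : HasSum (fun j => F (i, j)) (∑ j ∈ range i, F (i, j)) :=
      hasSum_sum_of_ne_finset_zero fun j hj => if_neg (by simpa using hj)
    simpa [sum_congr rfl fun j hj => if_pos (mem_range.1 hj), F] using h
  have hcol : ∀ j, HasSum (fun i => F (i, j)) (tailSum u (j + 1)) := fun j => by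
    rw [← hasSum_nat_add_iff' (j + 1)]
    simpa [F, tailSum, show ∀ n, j < n + (j + 1) by omega,
      sum_eq_zero fun i hi => if_neg (not_lt.2 (Nat.lt_succ_iff.1 (mem_range.1 hi)))]
      using ((summable_nat_add_iff (j + 1)).2 hs).hasSum
  have hF : Summable F := (summable_prod_of_nonneg fun p => ite_nonneg (hu _) le_rfl).2
    ⟨fun i => (hrow i).summable, hmean.congr fun i => (hrow i).tsum_eq.symm⟩
  rw [(hF.hasSum.prod_fiberwise hrow).tsum_eq, ← (Equiv.prodComm ℕ ℕ).tsum_eq]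
  exact hF.prod_symm.hasSum.prod_fiberwise hcol

theorem hasSum_restart (hs : Summable u) (h1 : ∑' i, u i = 1) {m : ℝ}
    (hm : HasSum (fun j => tailSum u (j + 1)) m) (n : ℕ) :
    HasSum (fun j => tailSum u (n + 1) * tailSum u (j + 1) - tailSum u (n + 1 + (j + 1)))
      (∑ k ∈ range (n + 1), (1 - ∑ i ∈ range (k + 1), u i - u k * m)) := by
  have hshift : HasSum (fun j => tailSum u (n + 1 + (j + 1)))
      (m - ∑ k ∈ range (n + 1), tailSum u (k + 1)) := by
    simpa only [← add_assoc, Nat.add_right_comm _ _ (n + 1), add_comm (n + 1)]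
      using (hasSum_nat_add_iff' (n + 1)).2 hm
  have htail : ∀ k, 1 - ∑ i ∈ range k, u i = tailSum u k := fun k => by
    rw [← h1, ← sum_range_add_tailSum hs k]; ring
  suffices ∑ k ∈ range (n + 1), (1 - ∑ i ∈ range (k + 1), u i - u k * m)
      = tailSum u (n + 1) * m - (m - ∑ k ∈ range (n + 1), tailSum u (k + 1)) by
    rw [this]; exact (hm.mul_left _).sub hshift
  calc ∑ k ∈ range (n + 1), (1 - ∑ i ∈ range (k + 1), u i - u k * m)
      = ∑ k ∈ range (n + 1), (tailSum u (k + 1) - u k * m) := by simp only [htail]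
    _ = tailSum u (n + 1) * m - (m - ∑ k ∈ range (n + 1), tailSum u (k + 1)) := by
        rw [sum_sub_distrib, ← sum_mul, ← htail]; ring

end TailSum

theorem log_convex_geometric_or_all_beneficial
    (u : ℕ → ℝ) (hu0 : ∀ n, 0 < u n) (hu1 : ∑' n, u n = 1)
    (hmean : Summable (fun n : ℕ => (n : ℝ) * u n))
    (μ : ℝ) (hμ : μ = ∑' n : ℕ, (n : ℝ) * u n)
    (U S : ℕ → ℝ)
    (hU : ∀ n, U n = ∑ k ∈ Finset.range (n + 1), u k)
    (hS : ∀ n, S n = ∑ k ∈ Finset.range (n + 1), (1 - U k - u k * μ))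
    (hlogconvex : ∀ n, 1 ≤ n → (u n) ^ 2 ≤ u (n - 1) * u (n + 1)) :
    (∃ ρ : ℝ, ρ ∈ Set.Ioo (0 : ℝ) 1 ∧ (∀ n, u n = ρ * (1 - ρ) ^ n) ∧ ∀ n, S n = 0) ∨
      (∀ n, S n < 0) := by
  have hs : Summable u := by
    by_contra h
    simp [tsum_eq_zero_of_not_summable h] at hu1
  set T := tailSum u
  have hT0 : T 0 = 1 := hu1
  have hTpos : ∀ n, 0 < T n := tailSum_pos hs hu0
  have hr : Monotone (stepRatio T) := monotone_stepRatio hTpos <|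
    tailSum_succ_sq_le (fun n => (hu0 n).le) hs fun n => by
      simpa using hlogconvex (n + 1) (by omega)
  have hSsum : ∀ n, HasSum (fun j => T (n + 1) * T (j + 1) - T (n + 1 + (j + 1))) (S n) := by
    intro n
    simpa only [hS, hU, hμ] using
      hasSum_restart hs hu1 (hasSum_tailSum_succ (fun n => (hu0 n).le) hs hmean) n
  by_cases hconst : ∀ n, stepRatio T n = stepRatio T 0
  · left
    set q := stepRatio T 0
    have hTq : ∀ n, T n = q ^ n := fun n => by
      rw [eq_mul_stepRatio_pow hTpos hconst, hT0, one_mul]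
    have hu : ∀ n, u n = (1 - q) * q ^ n := fun n => by
      linear_combination hTq n - hTq (n + 1) - tailSum_eq_add_tailSum_succ hs n
    refine ⟨1 - q, ⟨by simpa [hu 0] using hu0 0, by simpa [hTq 1] using hTpos 1⟩,
      fun n => by rw [hu, sub_sub_cancel], fun n => (hSsum n).unique ?_⟩
    simp [hTq, ← pow_add, Nat.add_assoc]
  · right
    obtain ⟨_ | j, hj⟩ := not_forall.1 hconst
    · exact absurd rfl hj
    intro n
    refine hasSum_lt (f := fun j => T (n + 1) * T (j + 1) - T (n + 1 + (j + 1))) (i := j)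
      (fun j => ?_) ?_ (hSsum n) hasSum_zero
    · simpa [hT0] using mul_le_mul_add_of_monotone_stepRatio hTpos hr (n + 1) (j + 1)
    · simpa [hT0] using mul_lt_mul_add_of_stepRatio_lt hTpos hr
        ((hr (Nat.zero_le _)).lt_of_ne' hj) n
end
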